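/- arXiv:2102.11168 — 9 statements merged into one kernel-verified Lean document; each statement's English description precedes it below -/
import Mathlib

section
/- Let ψ : Matrix A A ℂ → Matrix B B ℂ be a quantum channel with a Stinespring dilation V with environment E and associated complementary channel ψᶜ : Matrix A A ℂ → Matrix E E ℂ, and let φ : Matrix A A ℂ → Matrix C C ℂ be a quantum channel. If there exists a quantum channel θ : Matrix E E ℂ → Matrix C C ℂ such that φ = θ ∘ ψᶜ, then ψ and φ are compatible. (This is one direction of Theorem 1.) -/
open Matrix Kronecker
open scoped ComplexOrder

noncomputable section

variable {A B C E : Type*}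

/-- Partial trace over the second (right) tensor factor. -/
def trRight [Fintype C] (M : Matrix (B × C) (B × C) ℂ) : Matrix B B ℂ :=
  Matrix.of fun b b' => ∑ c, M (b, c) (b', c)

/-- Partial trace over the first (left) tensor factor. -/
def trLeft [Fintype B] (M : Matrix (B × C) (B × C) ℂ) : Matrix C C ℂ :=
  Matrix.of fun c c' => ∑ b, M (b, c) (b, c')

/-- Complete positivity of a map on matrices. -/
def IsCompletelyPositive [Fintype A] [Fintype B]
    (Φ : Matrix A A ℂ → Matrix B B ℂ) : Prop :=
  ∀ (n : Type) [Fintype n], ∀ M : Matrix (n × A) (n × A) ℂ, M.PosSemidef →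
    (Matrix.of fun p q : n × B =>
      Φ (Matrix.of fun a a' => M (p.1, a) (q.1, a')) p.2 q.2).PosSemidef

/-- A quantum channel: a linear, completely positive, trace-preserving map. -/
def IsQuantumChannel [Fintype A] [Fintype B] (Φ : Matrix A A ℂ → Matrix B B ℂ) : Prop :=
  IsLinearMap ℂ Φ ∧ IsCompletelyPositive Φ ∧ ∀ ρ : Matrix A A ℂ, (Φ ρ).trace = ρ.trace

/-- Compatibility of two channels: existence of a compatibilizer. -/
def Compatible [Fintype A] [Fintype B] [Fintype C]
    (ψ : Matrix A A ℂ → Matrix B B ℂ) (φ : Matrix A A ℂ → Matrix C C ℂ) : Prop :=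
  ∃ θ : Matrix A A ℂ → Matrix (B × C) (B × C) ℂ,
    IsQuantumChannel θ ∧ ψ = trRight ∘ θ ∧ φ = trLeft ∘ θ

/-- `ψ` divides `φ`: existence of a quotient channel. -/
def Divides [Fintype A] [Fintype B] [Fintype C]
    (ψ : Matrix A A ℂ → Matrix B B ℂ) (φ : Matrix A A ℂ → Matrix C C ℂ) : Prop :=
  ∃ θ' : Matrix B B ℂ → Matrix C C ℂ, IsQuantumChannel θ' ∧ φ = θ' ∘ ψ

/-- `V` is a Stinespring dilation (with environment `E`) of the channel `ψ`. -/
def IsStinespring [Fintype A] [Fintype B] [Fintype E] [DecidableEq A]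
    (ψ : Matrix A A ℂ → Matrix B B ℂ) (V : Matrix (B × E) A ℂ) : Prop :=
  Vᴴ * V = 1 ∧ ∀ ρ : Matrix A A ℂ, ψ ρ = trRight (V * ρ * Vᴴ)

/-- The complementary channel associated with the dilation `V`. -/
def complementary [Fintype A] [Fintype B] [Fintype E]
    (V : Matrix (B × E) A ℂ) (ρ : Matrix A A ℂ) : Matrix E E ℂ :=
  trLeft (V * ρ * Vᴴ)


/-- if `φ = θ ∘ ψᶜ` for some channel `θ`, then `ψ` and `φ` are compatible. -/
theorem compatible_of_factors_through_complementary
    {A B C E : Type*} [Fintype A] [Fintype B] [Fintype C] [Fintype E]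
    [Nonempty A] [Nonempty B] [Nonempty C] [Nonempty E] [DecidableEq A]
    (ψ : Matrix A A ℂ → Matrix B B ℂ) (hψ : IsQuantumChannel ψ)
    (φ : Matrix A A ℂ → Matrix C C ℂ) (hφ : IsQuantumChannel φ)
    (V : Matrix (B × E) A ℂ) (hV : IsStinespring ψ V)
    (θ : Matrix E E ℂ → Matrix C C ℂ) (hθ : IsQuantumChannel θ)
    (hfac : φ = θ ∘ complementary V) :
    Compatible ψ φ := by
  classical
  obtain ⟨hθlin, hθcp, hθtr⟩ := hθ
  set θL : Matrix E E ℂ →ₗ[ℂ] Matrix C C ℂ := IsLinearMap.mk' θ hθlin with hθL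
  have hθLapp : ∀ x, θL x = θ x := fun _ => rfl
  set Θ : Matrix A A ℂ → Matrix (B × C) (B × C) ℂ := fun ρ =>
    Matrix.of fun p q : B × C =>
      θ (Matrix.of fun e e' => (V * ρ * Vᴴ) (p.1, e) (q.1, e')) p.2 q.2 with hΘ
  -- blocks are linear in ρ
  have hblock_add : ∀ (x y : Matrix A A ℂ) (b b' : B),
      (Matrix.of fun e e' => (V * (x + y) * Vᴴ) (b, e) (b', e'))
      = (Matrix.of fun e e' => (V * x * Vᴴ) (b, e) (b', e'))
      + (Matrix.of fun e e' => (V * y * Vᴴ) (b, e) (b', e')) := by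
    intro x y b b'
    ext e e'
    simp [Matrix.mul_add, Matrix.add_mul]
  have hblock_smul : ∀ (c : ℂ) (x : Matrix A A ℂ) (b b' : B),
      (Matrix.of fun e e' => (V * (c • x) * Vᴴ) (b, e) (b', e'))
      = c • (Matrix.of fun e e' => (V * x * Vᴴ) (b, e) (b', e')) := by
    intro c x b b'
    ext e e'
    simp [Matrix.mul_smul, Matrix.smul_mul]
  refine ⟨Θ, ⟨⟨?_, ?_⟩, ?_, ?_⟩, ?_, ?_⟩
  · -- additivity
    intro x y
    ext ⟨b, c⟩ ⟨b', c'⟩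
    simp only [hΘ, Matrix.of_apply, Matrix.add_apply]
    rw [hblock_add, hθlin.map_add]
    rfl
  · -- smul
    intro c x
    ext ⟨b, cc⟩ ⟨b', cc'⟩
    simp only [hΘ, Matrix.of_apply, Matrix.smul_apply]
    rw [hblock_smul, hθlin.map_smul]
    rfl
  · -- complete positivity
    intro n _ M hM
    set eB : B ≃ Fin (Fintype.card B) := Fintype.equivFin B with heB
    -- the isometry 1ₙ ⊗ V reindexed
    set W : Matrix ((n × Fin (Fintype.card B)) × E) (n × A) ℂ := fun p q =>
      if p.1.1 = q.1 then V (eB.symm p.1.2, p.2) q.2 else 0 with hW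
    have hN : (W * M * Wᴴ).PosSemidef := hM.mul_mul_conjTranspose_same W
    have hP := hθcp (n × Fin (Fintype.card B)) (W * M * Wᴴ) hN
    have key : ∀ (i j : n) (b b' : Fin (Fintype.card B)) (e e' : E),
        (W * M * Wᴴ) ((i, b), e) ((j, b'), e')
        = (V * (Matrix.of fun a a' => M (i, a) (j, a')) * Vᴴ)
            (eB.symm b, e) (eB.symm b', e') := by
      intro i j b b' e e'
      have hWapp : ∀ p q, W p q = if p.1.1 = q.1 then V (eB.symm p.1.2, p.2) q.2 else 0 :=
        fun _ _ => rfl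
      simp only [Matrix.mul_apply, Matrix.conjTranspose_apply, Matrix.of_apply,
        Fintype.sum_prod_type, hWapp, apply_ite star, star_zero, ite_mul, mul_ite,
        zero_mul, mul_zero]
      simp only [Finset.sum_ite_irrel, Finset.sum_ite_eq, Finset.sum_ite_eq',
        Finset.mem_univ, if_true, Finset.sum_const_zero]
    have : (Matrix.of fun p q : n × (B × C) =>
        Θ (Matrix.of fun a a' => M (p.1, a) (q.1, a')) p.2 q.2)
        = (Matrix.of fun p q : (n × Fin (Fintype.card B)) × C =>
            θ (Matrix.of fun e e' => (W * M * Wᴴ) (p.1, e) (q.1, e')) p.2 q.2).submatrix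
          (fun p : n × (B × C) => ((p.1, eB p.2.1), p.2.2))
          (fun p : n × (B × C) => ((p.1, eB p.2.1), p.2.2)) := by
      ext ⟨i, b, c⟩ ⟨j, b', c'⟩
      simp only [hΘ, Matrix.of_apply, Matrix.submatrix_apply]
      congr 1
      ext e e'
      simp only [Matrix.of_apply]
      rw [key i j (eB b) (eB b') e e']
      simp
    rw [this]
    exact hP.submatrix _
  · -- trace preserving
    intro ρ
    have h1 : ∀ b : B, ∑ c : C,
        θ (Matrix.of fun e e' => (V * ρ * Vᴴ) (b, e) (b, e')) c c
        = ∑ e : E, (V * ρ * Vᴴ) (b, e) (b, e) := by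
      intro b
      have := hθtr (Matrix.of fun e e' => (V * ρ * Vᴴ) (b, e) (b, e'))
      simpa [Matrix.trace, Matrix.diag] using this
    calc (Θ ρ).trace = ∑ b : B, ∑ c : C,
          θ (Matrix.of fun e e' => (V * ρ * Vᴴ) (b, e) (b, e')) c c := by
          simp [hΘ, Matrix.trace, Matrix.diag, Fintype.sum_prod_type]
      _ = ∑ b : B, ∑ e : E, (V * ρ * Vᴴ) (b, e) (b, e) :=
          Finset.sum_congr rfl fun b _ => h1 b
      _ = (V * ρ * Vᴴ).trace := by
          simp [Matrix.trace, Matrix.diag, Fintype.sum_prod_type]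
      _ = ρ.trace := by
          rw [Matrix.trace_mul_cycle, hV.1, Matrix.one_mul]
  · -- ψ = trRight ∘ Θ
    funext ρ
    ext b b'
    have := hθtr (Matrix.of fun e e' => (V * ρ * Vᴴ) (b, e) (b', e'))
    rw [hV.2 ρ]
    simp only [Function.comp_apply, trRight, Matrix.of_apply, hΘ]
    simpa [Matrix.trace, Matrix.diag] using this.symm
  · -- φ = trLeft ∘ Θ
    funext ρ
    ext c c'
    have hsum : (∑ b : B, Matrix.of fun e e' => (V * ρ * Vᴴ) (b, e) (b, e'))
        = complementary V ρ := by
      ext e e'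
      simp [complementary, trLeft, Matrix.sum_apply]
    calc φ ρ c c' = θ (complementary V ρ) c c' := by rw [hfac]; rfl
      _ = θL (∑ b : B, Matrix.of fun e e' => (V * ρ * Vᴴ) (b, e) (b, e')) c c' := by
          rw [hsum, hθLapp]
      _ = (∑ b : B, θL (Matrix.of fun e e' => (V * ρ * Vᴴ) (b, e) (b, e'))) c c' := by
          rw [map_sum]
      _ = ∑ b : B, θ (Matrix.of fun e e' => (V * ρ * Vᴴ) (b, e) (b, e')) c c' := by
          simp [Matrix.sum_apply, hθLapp]
      _ = (trLeft ∘ Θ) ρ c c' := by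
          simp [trLeft, hΘ]


end
end

section
/- Let ψ : Matrix A A ℂ → Matrix B B ℂ and φ : Matrix A A ℂ → Matrix C C ℂ be compatible quantum channels. Then there exist a finite nonempty type E and an isometry V : Matrix (B × (C × E)) A ℂ (Vᴴ * V = 1) which is a Stinespring dilation of ψ with environment C × E (i.e. ψ ρ = Tr_{C×E} (V * ρ * Vᴴ) for all ρ), such that the associated complementary channel ψᶜ ρ = Tr_B (V * ρ * Vᴴ) : Matrix (C × E) (C × E) ℂ satisfies φ = Tr_E ∘ ψᶜ; in particular there is a quantum channel θ : Matrix (C × E) (C × E) ℂ → Matrix C C ℂ with φ = θ ∘ ψᶜ. (This is the other direction of Theorem 1.) -/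
open Matrix Kronecker
open scoped ComplexOrder

noncomputable section

variable {A B C E : Type*}

/-- The conclusion of STATEMENT 1, for a given environment type `E`. -/
def Stmt1Witness {A B C : Type*} [Fintype A] [Fintype B] [Fintype C] [DecidableEq A]
    (ψ : Matrix A A ℂ → Matrix B B ℂ) (φ : Matrix A A ℂ → Matrix C C ℂ)
    (E : Type) [Fintype E] : Prop :=
  Nonempty E ∧
  ∃ V : Matrix (B × (C × E)) A ℂ,
    Vᴴ * V = 1 ∧
    (∀ ρ : Matrix A A ℂ, ψ ρ = trRight (V * ρ * Vᴴ)) ∧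
    φ = trRight ∘ complementary V ∧
    ∃ θ : Matrix (C × E) (C × E) ℂ → Matrix C C ℂ,
      IsQuantumChannel θ ∧ φ = θ ∘ complementary V

/-! ### Auxiliary lemmas -/

lemma trRight_posSemidef' {X Y : Type*} [Fintype X] [Fintype Y]
    {M : Matrix (X × Y) (X × Y) ℂ} (hM : M.PosSemidef) : (trRight M).PosSemidef := by
  classical
  refine posSemidef_iff_dotProduct_mulVec.mpr ⟨?_, ?_⟩
  · ext x x'
    simp only [conjTranspose_apply, trRight, of_apply, star_sum]
    exact Finset.sum_congr rfl fun e _ => congrFun (congrFun hM.1 (x, e)) (x', e)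
  · intro x
    have key : star x ⬝ᵥ (trRight M) *ᵥ x
        = ∑ e : Y, star (fun p : X × Y => if p.2 = e then x p.1 else 0) ⬝ᵥ
            M *ᵥ (fun p : X × Y => if p.2 = e then x p.1 else 0) := by
      have hL : star x ⬝ᵥ (trRight M) *ᵥ x
          = ∑ e : Y, ∑ x1 : X, ∑ x2 : X, star (x x1) * (M (x1, e) (x2, e) * x x2) := by
        rw [Finset.sum_comm]
        simp only [dotProduct, mulVec, trRight, of_apply, Pi.star_apply]
        refine Finset.sum_congr rfl fun x1 _ => ?_
        rw [Finset.sum_comm]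
        simp [Finset.mul_sum, Finset.sum_mul]
      have hR : ∀ e : Y, star (fun p : X × Y => if p.2 = e then x p.1 else 0) ⬝ᵥ
                M *ᵥ (fun p : X × Y => if p.2 = e then x p.1 else 0)
          = ∑ x1 : X, ∑ x2 : X, star (x x1) * (M (x1, e) (x2, e) * x x2) := by
        intro e
        simp only [dotProduct, mulVec, Pi.star_apply, apply_ite, star_zero,
          Fintype.sum_prod_type, ite_mul, zero_mul, mul_ite, mul_zero,
          Finset.mul_sum]
        refine Finset.sum_congr rfl fun x1 _ => ?_
        rw [Finset.sum_comm]
        simp [Finset.sum_ite_eq']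
      rw [hL]
      exact Finset.sum_congr rfl fun e _ => (hR e).symm
    rw [key]
    exact Finset.sum_nonneg fun e _ => hM.dotProduct_mulVec_nonneg _

lemma trRight_channel' {X Y : Type*} [Fintype X] [Fintype Y] :
    IsQuantumChannel (trRight (B := X) (C := Y)) := by
  refine ⟨⟨fun M N => ?_, fun c M => ?_⟩, ?_, fun ρ => ?_⟩
  · ext b b'; simp [trRight, Finset.sum_add_distrib]
  · ext b b'; simp [trRight, Finset.mul_sum]
  · intro n _ M hM
    have h : (Matrix.of fun p q : n × X =>
        trRight (Matrix.of fun a a' => M (p.1, a) (q.1, a')) p.2 q.2)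
        = trRight (M.submatrix (fun r : (n × X) × Y => (r.1.1, (r.1.2, r.2)))
            (fun r : (n × X) × Y => (r.1.1, (r.1.2, r.2)))) := by
      ext p q
      simp [trRight]
    rw [h]
    exact trRight_posSemidef' (hM.submatrix _)
  · simp [Matrix.trace, Matrix.diag, trRight, Fintype.sum_prod_type]


/-- compatible channels admit a dilation of `ψ` whose complementary
channel yields `φ` after tracing out `E`. -/

theorem exists_dilation_of_compatible
    {A B C : Type*} [Fintype A] [Fintype B] [Fintype C]
    [Nonempty A] [Nonempty B] [Nonempty C] [DecidableEq A]
    (ψ : Matrix A A ℂ → Matrix B B ℂ) (hψ : IsQuantumChannel ψ)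
    (φ : Matrix A A ℂ → Matrix C C ℂ) (hφ : IsQuantumChannel φ)
    (hcomp : Compatible ψ φ) :
    ∃ (E : Type) (iE : Fintype E), @Stmt1Witness A B C _ _ _ _ ψ φ E iE := by
  classical
  obtain ⟨θ₀, ⟨hlin, hcp, htr⟩, hψθ, hφθ⟩ := hcomp
  -- the maximally entangled (unnormalized) state is PSD
  set nA : Type := Fin (Fintype.card A) with hnA
  have ea : nA ≃ A := (Fintype.equivFin A).symm
  set v : nA × A → ℂ := fun p => if ea p.1 = p.2 then 1 else 0 with hv
  set M₀ : Matrix (nA × A) (nA × A) ℂ := Matrix.of fun p q => v p * star (v q) with hM₀def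
  have hM₀ : M₀.PosSemidef := by
    refine posSemidef_iff_dotProduct_mulVec.mpr ⟨?_, ?_⟩
    · ext p q
      simp [hM₀def, conjTranspose_apply, mul_comm]
    · intro x
      have hform : star x ⬝ᵥ M₀ *ᵥ x
          = star (∑ q, star (v q) * x q) * (∑ q, star (v q) * x q) := by
        simp only [hM₀def, dotProduct, mulVec, of_apply, Pi.star_apply, star_sum, star_star]
        rw [Finset.sum_mul]
        refine Finset.sum_congr rfl fun p _ => ?_
        rw [Finset.mul_sum, Finset.mul_sum]
        refine Finset.sum_congr rfl fun q _ => ?_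
        simp only [StarMul.star_mul, star_star]
        ring
      rw [hform]
      exact star_mul_self_nonneg _
  -- the Choi matrix of θ₀ is PSD
  have hMstd : ∀ i j : nA, (Matrix.of fun x x' : A => M₀ (i, x) (j, x'))
      = single (ea i) (ea j) 1 := by
    intro i j
    ext x x'
    by_cases h1 : ea i = x <;> by_cases h2 : ea j = x' <;>
      simp [hM₀def, hv, single, h1, h2]
  have hJps : (Matrix.of fun p q : nA × (B × C) =>
      θ₀ (Matrix.of fun a a' => M₀ (p.1, a) (q.1, a')) p.2 q.2).PosSemidef :=
    hcp nA M₀ hM₀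
  open scoped MatrixOrder Matrix.Norms.L2Operator in
  obtain ⟨W, hW⟩ := CStarAlgebra.nonneg_iff_eq_star_mul_self.mp hJps.nonneg
  rw [star_eq_conjTranspose] at hW
  -- entries of the Choi matrix
  have hWJ0 : ∀ (a a' : A) (bc bc' : B × C),
      (∑ e : nA × (B × C), star (W e (ea.symm a, bc)) * W e (ea.symm a', bc'))
        = θ₀ (single a a' 1) bc bc' := by
    intro a a' bc bc'
    have h1 : (∑ e : nA × (B × C), star (W e (ea.symm a, bc)) * W e (ea.symm a', bc'))
        = (Wᴴ * W) (ea.symm a, bc) (ea.symm a', bc') := by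
      simp [mul_apply, conjTranspose_apply]
    rw [h1, ← hW]
    show θ₀ (Matrix.of fun x x' => M₀ (ea.symm a, x) (ea.symm a', x')) bc bc' = _
    rw [hMstd]
    simp
  -- transport the environment to `Type 0`
  set Et : Type := Fin (Fintype.card (nA × (B × C))) with hEt
  have eqv : (nA × (B × C)) ≃ Et := Fintype.equivFin _
  set WW : Et → (A × (B × C)) → ℂ := fun e x => W (eqv.symm e) (ea.symm x.1, x.2) with hWW
  have hWJ : ∀ (a a' : A) (bc bc' : B × C),
      (∑ e : Et, star (WW e (a, bc)) * WW e (a', bc'))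
        = θ₀ (single a a' 1) bc bc' := by
    intro a a' bc bc'
    rw [← hWJ0 a a' bc bc']
    exact Equiv.sum_comp eqv.symm
      fun e => star (W e (ea.symm a, bc)) * W e (ea.symm a', bc')
  haveI : Nonempty Et := by
    rw [hEt]
    exact ⟨⟨0, Fintype.card_pos⟩⟩
  -- the dilation isometry
  set V : Matrix (B × (C × Et)) A ℂ :=
    Matrix.of fun p a => star (WW p.2.2 (a, (p.1, p.2.1))) with hVdef
  -- expansion of a linear map over the standard basis
  have hexp : ∀ ρ : Matrix A A ℂ,
      θ₀ ρ = ∑ a : A, ∑ a' : A, ρ a a' • θ₀ (single a a' 1) := by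
    intro ρ
    have hdec : ρ = ∑ a : A, ∑ a' : A, ρ a a' • single a a' 1 := by
      conv_lhs => rw [matrix_eq_sum_single ρ]
      refine Finset.sum_congr rfl fun a _ => Finset.sum_congr rfl fun a' _ => ?_
      ext x y
      simp [single, mul_ite]
    conv_lhs => rw [hdec]
    have hθL : θ₀ (∑ a : A, ∑ a' : A, ρ a a' • single a a' 1)
        = (IsLinearMap.mk' θ₀ hlin) (∑ a : A, ∑ a' : A, ρ a a' • single a a' 1) := rfl
    rw [hθL, map_sum]
    refine Finset.sum_congr rfl fun a _ => ?_
    rw [map_sum]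
    exact Finset.sum_congr rfl fun a' _ => map_smul _ _ _
  -- the key entrywise identity
  have hstar : ∀ (ρ : Matrix A A ℂ) (b : B) (c : C) (b' : B) (c' : C),
      θ₀ ρ (b, c) (b', c') = ∑ e : Et, (V * ρ * Vᴴ) (b, (c, e)) (b', (c', e)) := by
    intro ρ b c b' c'
    have hR : ∀ e : Et, (V * ρ * Vᴴ) (b, (c, e)) (b', (c', e))
        = ∑ a : A, ∑ a' : A,
            ρ a a' * (star (WW e (a, (b, c))) * WW e (a', (b', c'))) := by
      intro e
      simp only [mul_apply, conjTranspose_apply, hVdef, of_apply, star_star, Finset.sum_mul]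
      rw [Finset.sum_comm]
      exact Finset.sum_congr rfl fun a _ => Finset.sum_congr rfl fun a' _ => by ring
    calc θ₀ ρ (b, c) (b', c')
        = ∑ a : A, ∑ a' : A, ρ a a' * θ₀ (single a a' 1) (b, c) (b', c') := by
          rw [hexp ρ]
          simp [Matrix.sum_apply]
      _ = ∑ a : A, ∑ a' : A, ∑ e : Et,
            ρ a a' * (star (WW e (a, (b, c))) * WW e (a', (b', c'))) := by
          refine Finset.sum_congr rfl fun a _ => Finset.sum_congr rfl fun a' _ => ?_
          rw [← hWJ a a' (b, c) (b', c'), Finset.mul_sum]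
      _ = ∑ a : A, ∑ e : Et, ∑ a' : A,
            ρ a a' * (star (WW e (a, (b, c))) * WW e (a', (b', c'))) := by
          exact Finset.sum_congr rfl fun a _ => Finset.sum_comm
      _ = ∑ e : Et, ∑ a : A, ∑ a' : A,
            ρ a a' * (star (WW e (a, (b, c))) * WW e (a', (b', c'))) := Finset.sum_comm
      _ = ∑ e : Et, (V * ρ * Vᴴ) (b, (c, e)) (b', (c', e)) :=
          Finset.sum_congr rfl fun e _ => (hR e).symm
  -- V is an isometry
  have hVV : Vᴴ * V = 1 := by
    ext a a'
    have h1 : (Vᴴ * V) a a'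
        = ∑ b : B, ∑ c : C, ∑ e : Et, star (WW e (a', (b, c))) * WW e (a, (b, c)) := by
      simp only [mul_apply, conjTranspose_apply, hVdef, of_apply, star_star,
        Fintype.sum_prod_type]
      exact Finset.sum_congr rfl fun b _ => Finset.sum_congr rfl fun c _ =>
        Finset.sum_congr rfl fun e _ => mul_comm _ _
    rw [h1]
    have h2 : ∑ b : B, ∑ c : C, ∑ e : Et, star (WW e (a', (b, c))) * WW e (a, (b, c))
        = (θ₀ (single a' a 1)).trace := by
      rw [show (θ₀ (single a' a 1)).trace
          = ∑ b : B, ∑ c : C, θ₀ (single a' a 1) (b, c) (b, c) by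
        simp [Matrix.trace, Matrix.diag, Fintype.sum_prod_type]]
      exact Finset.sum_congr rfl fun b _ => Finset.sum_congr rfl fun c _ =>
        hWJ a' a (b, c) (b, c)
    rw [h2, htr]
    rcases eq_or_ne a' a with h | h
    · subst h
      simp [Matrix.trace_single_eq_same, Matrix.one_apply]
    · rw [Matrix.trace_single_eq_of_ne _ _ _ h]
      simp [Matrix.one_apply, Ne.symm h]
  -- dilation property
  have hdil : ∀ ρ : Matrix A A ℂ, ψ ρ = trRight (V * ρ * Vᴴ) := by
    intro ρ
    ext b b'
    rw [hψθ]
    show trRight (θ₀ ρ) b b' = trRight (V * ρ * Vᴴ) b b'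
    simp only [trRight, of_apply, Fintype.sum_prod_type]
    exact Finset.sum_congr rfl fun c _ => hstar ρ b c b' c
  -- complementary channel property
  have hφc : φ = trRight ∘ complementary V := by
    funext ρ
    ext c c'
    rw [hφθ]
    show trLeft (θ₀ ρ) c c' = trRight (complementary V ρ) c c'
    simp only [trLeft, trRight, complementary, of_apply]
    calc ∑ b : B, θ₀ ρ (b, c) (b, c')
        = ∑ b : B, ∑ e : Et, (V * ρ * Vᴴ) (b, (c, e)) (b, (c', e)) :=
          Finset.sum_congr rfl fun b _ => hstar ρ b c b c'
      _ = ∑ e : Et, ∑ b : B, (V * ρ * Vᴴ) (b, (c, e)) (b, (c', e)) := Finset.sum_comm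
  exact ⟨Et, inferInstance, ⟨inferInstance, V, hVV, hdil, hφc, trRight, trRight_channel', hφc⟩⟩


end
end

section
/- Let ψ : Matrix A A ℂ → Matrix B B ℂ and φ : Matrix A A ℂ → Matrix C C ℂ be quantum channels. If ψ admits a Stinespring dilation with respect to which it is degradable, and ψ and φ are compatible, then ψ divides φ. (Theorem 2, part (i).) -/
open Matrix Kronecker
open scoped ComplexOrder

noncomputable section

variable {A B C E : Type*}

/-- `ψ` is degradable with respect to some Stinespring dilation with environment `E`. -/
def DegradableWith {A B : Type*} [Fintype A] [Fintype B] [DecidableEq A]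
    (ψ : Matrix A A ℂ → Matrix B B ℂ) (E : Type) [Fintype E] : Prop :=
  Nonempty E ∧
  ∃ V : Matrix (B × E) A ℂ, IsStinespring ψ V ∧
    ∃ lam : Matrix B B ℂ → Matrix E E ℂ, IsQuantumChannel lam ∧
      complementary V = lam ∘ ψ

section Aux

/-- pseudoinverse of a PSD matrix, packaged existentially -/
lemma exists_pinv {X : Type*} [Fintype X] [DecidableEq X] {P : Matrix X X ℂ}
    (hP : P.PosSemidef) :
    ∃ Q : Matrix X X ℂ, Qᴴ = Q ∧ (P * Q)ᴴ = P * Q ∧ P * Q * P = P ∧ Q * P * Q = Q := by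
  have hH := hP.1
  set U : Matrix X X ℂ := (hH.eigenvectorUnitary : Matrix X X ℂ) with hUdef
  set f : X → ℂ := fun i => ((hH.eigenvalues i : ℝ) : ℂ) with hfdef
  have hU : Uᴴ * U = 1 := by
    have := Matrix.mem_unitaryGroup_iff'.mp hH.eigenvectorUnitary.2
    simpa [Matrix.star_eq_conjTranspose] using this
  have hspec : P = U * Matrix.diagonal f * Uᴴ := by
    have := hH.spectral_theorem
    rw [Unitary.conjStarAlgAut_apply] at this
    exact this
  have key : ∀ a b : X → ℂ,
      (U * Matrix.diagonal a * Uᴴ) * (U * Matrix.diagonal b * Uᴴ)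
        = U * Matrix.diagonal (fun i => a i * b i) * Uᴴ := by
    intro a b
    calc (U * Matrix.diagonal a * Uᴴ) * (U * Matrix.diagonal b * Uᴴ)
        = U * Matrix.diagonal a * (Uᴴ * U) * Matrix.diagonal b * Uᴴ := by
          simp only [Matrix.mul_assoc]
      _ = U * (Matrix.diagonal a * Matrix.diagonal b) * Uᴴ := by
          rw [hU]; simp only [Matrix.mul_assoc, Matrix.one_mul]
      _ = U * Matrix.diagonal (fun i => a i * b i) * Uᴴ := by
          rw [Matrix.diagonal_mul_diagonal]
  have herm : ∀ a : X → ℂ, (∀ i, star (a i) = a i) →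
      (U * Matrix.diagonal a * Uᴴ)ᴴ = U * Matrix.diagonal a * Uᴴ := by
    intro a ha
    simp only [Matrix.conjTranspose_mul, Matrix.conjTranspose_conjTranspose,
      Matrix.diagonal_conjTranspose]
    have : star a = a := funext ha
    rw [this, Matrix.mul_assoc]
  have hfstar : ∀ i, star (f i) = f i := fun i => Complex.conj_ofReal _
  refine ⟨U * Matrix.diagonal (fun i => (f i)⁻¹) * Uᴴ, ?_, ?_, ?_, ?_⟩
  · exact herm _ fun i => by rw [star_inv₀, hfstar]
  · rw [hspec, key]
    exact herm _ fun i => by simp only [star_mul', star_inv₀, hfstar i]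
  · rw [hspec, key, key]
    have hfun : (fun i => f i * (f i)⁻¹ * f i) = f := by
      funext i
      rcases eq_or_ne (f i) 0 with h | h
      · rw [h]; simp
      · field_simp
    rw [hfun]
  · rw [hspec, key, key]
    have hfun : (fun i => (f i)⁻¹ * f i * (f i)⁻¹) = (fun i => (f i)⁻¹) := by
      funext i
      rcases eq_or_ne (f i) 0 with h | h
      · rw [h]; simp
      · field_simp
    rw [hfun]

/-- projection fixes factors of P -/
lemma proj_fix {X Y : Type*} [Fintype X] [Fintype Y] {P Q : Matrix X X ℂ}
    (hPh : Pᴴ = P) (hQh : (P * Q)ᴴ = P * Q) (hPQP : P * Q * P = P)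
    {T : Matrix X Y ℂ} (hT : T * Tᴴ = P) : P * Q * T = T := by
  set Pi := P * Q with hPidef
  have hP_PQ : P * Pi = P := by
    have h := congrArg Matrix.conjTranspose hPQP
    rw [Matrix.conjTranspose_mul, hQh, hPh] at h
    exact h
  have e1 : (T - Pi * T)ᴴ = Tᴴ - Tᴴ * Piᴴ := by
    rw [Matrix.conjTranspose_sub, Matrix.conjTranspose_mul]
  have key : (T - Pi * T) * (T - Pi * T)ᴴ = 0 := by
    rw [e1, Matrix.mul_sub, Matrix.sub_mul, Matrix.sub_mul]
    have a2 : Pi * T * Tᴴ = P := by rw [Matrix.mul_assoc, hT]; exact hPQP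
    have a3 : T * (Tᴴ * Piᴴ) = P := by rw [← Matrix.mul_assoc, hT, hQh]; exact hP_PQ
    have a4 : Pi * T * (Tᴴ * Piᴴ) = P := by
      rw [hQh, Matrix.mul_assoc Pi T (Tᴴ * Pi), ← Matrix.mul_assoc T Tᴴ Pi, hT, hP_PQ]
      exact hPQP
    rw [hT, a2, a3, a4]
    simp
  have h0 := Matrix.self_mul_conjTranspose_eq_zero.mp key
  exact (sub_eq_zero.mp h0).symm

/-- outer products are PSD -/
lemma posSemidef_outer {X : Type*} [Fintype X] (v : X → ℂ) :
    (Matrix.of fun p q => v p * star (v q) : Matrix X X ℂ).PosSemidef := by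
  refine Matrix.PosSemidef.of_dotProduct_mulVec_nonneg ?_ ?_
  · ext p q
    simp [Matrix.conjTranspose_apply, mul_comm]
  · intro x
    have hcalc : (star x) ⬝ᵥ ((Matrix.of fun p q => v p * star (v q) : Matrix X X ℂ) *ᵥ x)
        = star ((star v) ⬝ᵥ x) * ((star v) ⬝ᵥ x) := by
      simp only [dotProduct, Matrix.mulVec, Matrix.of_apply, Pi.star_apply,
        star_sum, star_mul', star_star, Finset.mul_sum, Finset.sum_mul]
      rw [Finset.sum_comm]
      apply Finset.sum_congr rfl
      intro p _
      apply Finset.sum_congr rfl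
      intro q _
      ring
    rw [hcalc]
    exact star_mul_self_nonneg _

/-- auxiliary delta-collapse for double sums -/
lemma sum_delta_left {n β : Type*} [Fintype n] [DecidableEq n] (i : n) (f : n → β → ℂ)
    (s : Finset β) :
    ∑ x : n, ∑ y ∈ s, (if i = x then f x y else 0) = ∑ y ∈ s, f i y := by
  rw [Finset.sum_comm]
  simp

/-- sums of Kraus conjugations with normalized Kraus operators are quantum channels -/
lemma kraus_isQuantumChannel {D₁ D₂ : Type*} [Fintype D₁] [Fintype D₂] [DecidableEq D₁]
    {ι : Type*} [Fintype ι] (K : ι → Matrix D₂ D₁ ℂ)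
    (hK : ∑ k, (K k)ᴴ * K k = 1) :
    IsQuantumChannel (fun σ : Matrix D₁ D₁ ℂ => ∑ k, K k * σ * (K k)ᴴ) := by
  have hsi : ∀ (P : Prop) [Decidable P] (a b : ℂ), star (if P then a else b)
      = if P then star a else star b := fun P _ a b => by split <;> rfl
  refine ⟨⟨fun σ τ => ?_, fun c σ => ?_⟩, ?_, fun ρ => ?_⟩
  · simp [Matrix.mul_add, Matrix.add_mul, Finset.sum_add_distrib]
  · simp [Matrix.mul_smul, Matrix.smul_mul, Finset.smul_sum]
  · intro n _ M hM
    classical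
    have hrw : (Matrix.of fun p q : n × D₂ =>
        (∑ k, K k * (Matrix.of fun a a' => M (p.1, a) (q.1, a')) * (K k)ᴴ) p.2 q.2)
        = ∑ k, ((1 : Matrix n n ℂ) ⊗ₖ K k) * M * ((1 : Matrix n n ℂ) ⊗ₖ K k)ᴴ := by
      ext p q
      obtain ⟨i, c⟩ := p
      obtain ⟨j, c'⟩ := q
      simp only [Matrix.sum_apply, Matrix.of_apply, Matrix.mul_apply,
        Matrix.kroneckerMap_apply, Matrix.conjTranspose_apply, Matrix.one_apply,
        Fintype.sum_prod_type,
        ite_mul, one_mul, zero_mul, mul_ite, mul_one, mul_zero]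
      simp only [hsi, star_zero, mul_ite, mul_zero]
      simp only [sum_delta_left]
    rw [hrw]
    refine Finset.sum_induction _ _ (fun a b ha hb => ha.add hb) Matrix.PosSemidef.zero ?_
    intro k _
    exact hM.mul_mul_conjTranspose_same _
  · rw [Matrix.trace_sum]
    have : ∀ k, (K k * ρ * (K k)ᴴ).trace = ((K k)ᴴ * K k * ρ).trace := by
      intro k
      rw [Matrix.trace_mul_comm, ← Matrix.mul_assoc]
    simp_rw [this]
    rw [← Matrix.trace_sum, ← Finset.sum_mul, hK, Matrix.one_mul]

/-- composition of quantum channels is a quantum channel -/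
lemma isQuantumChannel_comp {D₁ D₂ D₃ : Type*} [Fintype D₁] [Fintype D₂] [Fintype D₃]
    {Φ₂ : Matrix D₂ D₂ ℂ → Matrix D₃ D₃ ℂ} {Φ₁ : Matrix D₁ D₁ ℂ → Matrix D₂ D₂ ℂ}
    (h₂ : IsQuantumChannel Φ₂) (h₁ : IsQuantumChannel Φ₁) :
    IsQuantumChannel (Φ₂ ∘ Φ₁) := by
  refine ⟨⟨fun x y => ?_, fun c x => ?_⟩, ?_, fun ρ => ?_⟩
  · simp only [Function.comp_apply, h₁.1.map_add, h₂.1.map_add]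
  · simp only [Function.comp_apply, h₁.1.map_smul, h₂.1.map_smul]
  · intro n _ M hM
    exact h₂.2.1 n _ (h₁.2.1 n M hM)
  · simp only [Function.comp_apply, h₂.2.2, h₁.2.2]

/-- linear maps on matrices agreeing on the standard basis agree -/
lemma linear_ext {A Z : Type*} [Fintype A] [Fintype Z] [DecidableEq A]
    {f g : Matrix A A ℂ → Matrix Z Z ℂ}
    (hf : IsLinearMap ℂ f) (hg : IsLinearMap ℂ g)
    (h : ∀ i j, f (Matrix.single i j 1) = g (Matrix.single i j 1)) :
    f = g := by
  funext ρ
  have hrep : ρ = ∑ i, ∑ j, ρ i j • Matrix.single i j (1 : ℂ) := by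
    conv_lhs => rw [Matrix.matrix_eq_sum_single ρ]
    simp [Matrix.smul_single]
  let f' := IsLinearMap.mk' f hf
  let g' := IsLinearMap.mk' g hg
  have key : f' ρ = g' ρ := by
    rw [hrep, map_sum, map_sum]
    refine Finset.sum_congr rfl fun i _ => ?_
    rw [map_sum, map_sum]
    refine Finset.sum_congr rfl fun j _ => ?_
    rw [LinearMap.map_smul, LinearMap.map_smul]
    show ρ i j • f _ = ρ i j • g _
    rw [h i j]
  exact key

open scoped MatrixOrder in
/-- Hermitian square root of a PSD matrix, packaged existentially -/
lemma exists_herm_sqrt {X : Type*} [Fintype X] [DecidableEq X] {P : Matrix X X ℂ}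
    (hP : P.PosSemidef) : ∃ S : Matrix X X ℂ, Sᴴ = S ∧ S * S = P :=
  ⟨CFC.sqrt P, (CFC.sqrt_nonneg P).posSemidef.1, CFC.sqrt_mul_sqrt_self P hP.nonneg⟩

end Aux

/-- Theorem 2(i): degradable and compatible implies divisible. -/
theorem divides_of_degradable_of_compatible
    {A B C : Type*} [Fintype A] [Fintype B] [Fintype C]
    [Nonempty A] [Nonempty B] [Nonempty C] [DecidableEq A]
    (ψ : Matrix A A ℂ → Matrix B B ℂ) (hψ : IsQuantumChannel ψ)
    (φ : Matrix A A ℂ → Matrix C C ℂ) (hφ : IsQuantumChannel φ)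
    (hdeg : ∃ (E : Type) (iE : Fintype E), @DegradableWith A B _ _ _ ψ E iE)
    (hcomp : Compatible ψ φ) :
    Divides ψ φ := by
  classical
  obtain ⟨Ev, iE, hdw⟩ := hdeg
  obtain ⟨_hne, V, ⟨hViso, hVdil⟩, lam, hlam, hclam⟩ := hdw
  obtain ⟨θ, hθ, hψθ, hφθ⟩ := hcomp
  -- conjugation of a standard basis matrix
  have H1 : ∀ (i j : A) (x y : B × Ev),
      (V * Matrix.single i j (1 : ℂ) * Vᴴ) x y = V x i * star (V y j) := by
    intro i j x y
    simp only [Matrix.mul_apply, Matrix.single, Matrix.of_apply,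
      Matrix.conjTranspose_apply, ite_and, mul_ite, mul_one, mul_zero, ite_mul, zero_mul,
      Finset.sum_ite_eq, Finset.mem_univ, if_true]
  have hψV : ∀ (i j : A) (b b' : B), ψ (Matrix.single i j (1 : ℂ)) b b'
      = ∑ e, V (b, e) i * star (V (b', e) j) := by
    intro i j b b'
    rw [hVdil]
    show (∑ e, (V * Matrix.single i j (1 : ℂ) * Vᴴ) (b, e) (b', e)) = _
    exact Finset.sum_congr rfl fun e _ => H1 i j (b, e) (b', e)
  have hψc : ∀ (i j : A) (e e' : Ev), lam (ψ (Matrix.single i j (1 : ℂ))) e e'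
      = ∑ b, V (b, e) i * star (V (b, e') j) := by
    intro i j e e'
    have h := congrFun hclam.symm (Matrix.single i j (1 : ℂ))
    have h2 : lam (ψ (Matrix.single i j (1 : ℂ))) e e'
        = complementary V (Matrix.single i j (1 : ℂ)) e e' := by
      rw [← h]; rfl
    rw [h2]
    show (∑ b, (V * Matrix.single i j (1 : ℂ) * Vᴴ) (b, e) (b, e')) = _
    exact Finset.sum_congr rfl fun b _ => H1 i j (b, e) (b, e')
  -- the Choi matrix of θ and its purification
  set 𝒥 : Matrix (A × B × C) (A × B × C) ℂ :=
    Matrix.of fun p q => θ (Matrix.single p.1 q.1 (1 : ℂ)) p.2 q.2 with hJdef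
  have hJpsd : 𝒥.PosSemidef := by
    set v : Fin (Fintype.card A) × A → ℂ :=
      fun p => if p.1 = Fintype.equivFin A p.2 then 1 else 0 with hvdef
    have hv := posSemidef_outer v
    have hout := hθ.2.1 (Fin (Fintype.card A)) _ hv
    have hblk : ∀ i' j' : Fin (Fintype.card A),
        (Matrix.of fun a a' : A => v (i', a) * star (v (j', a')))
          = Matrix.single ((Fintype.equivFin A).symm i')
              ((Fintype.equivFin A).symm j') (1 : ℂ) := by
      intro i' j'
      ext a a'
      simp only [Matrix.of_apply, Matrix.single, hvdef]
      by_cases h1 : i' = Fintype.equivFin A a <;> by_cases h2 : j' = Fintype.equivFin A a' <;>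
        simp [h1, h2, Equiv.symm_apply_eq]
    have heq : 𝒥 = Matrix.submatrix
        (Matrix.of fun p q : Fin (Fintype.card A) × (B × C) =>
          θ (Matrix.of fun a a' => (Matrix.of fun p' q' => v p' * star (v q'))
            (p.1, a) (q.1, a')) p.2 q.2)
        (fun p : A × B × C => (Fintype.equivFin A p.1, p.2))
        (fun p : A × B × C => (Fintype.equivFin A p.1, p.2)) := by
      ext p q
      simp only [Matrix.submatrix_apply, Matrix.of_apply, hJdef]
      rw [hblk (Fintype.equivFin A p.1) (Fintype.equivFin A q.1)]
      simp
    rw [heq]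
    exact hout.submatrix _
  obtain ⟨S, hSherm, hSS0⟩ := exists_herm_sqrt hJpsd
  have hSS : S * Sᴴ = 𝒥 := by rw [hSherm]; exact hSS0
  have hJdecomp : ∀ x y, 𝒥 x y = ∑ g, S x g * star (S y g) := by
    intro x y
    rw [← hSS, Matrix.mul_apply]
    exact Finset.sum_congr rfl fun g _ => by rw [Matrix.conjTranspose_apply]
  set W : Matrix (B × A) Ev ℂ := Matrix.of fun x e => V (x.1, e) x.2 with hWdef
  set T : Matrix (B × A) (C × (A × B × C)) ℂ :=
    Matrix.of fun x y => S (x.2, (x.1, y.1)) y.2 with hTdef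
  -- the two purifications of the Choi matrix of ψ agree
  have hTT : ∀ (i j : A) (b b' : B), ψ (Matrix.single i j (1 : ℂ)) b b'
      = ∑ y : C × (A × B × C), T (b, i) y * star (T (b', j) y) := by
    intro i j b b'
    have h1 : ψ (Matrix.single i j (1 : ℂ)) b b'
        = ∑ c, 𝒥 (i, (b, c)) (j, (b', c)) := by
      rw [hψθ]; rfl
    rw [h1, Fintype.sum_prod_type]
    refine Finset.sum_congr rfl fun c _ => ?_
    rw [hJdecomp]
    rfl
  have hφT : ∀ (i j : A) (c c' : C), φ (Matrix.single i j (1 : ℂ)) c c'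
      = ∑ b, ∑ g : A × B × C, T (b, i) (c, g) * star (T (b, j) (c', g)) := by
    intro i j c c'
    have h1 : φ (Matrix.single i j (1 : ℂ)) c c'
        = ∑ b, 𝒥 (i, (b, c)) (j, (b, c')) := by
      rw [hφθ]; rfl
    rw [h1]
    refine Finset.sum_congr rfl fun b _ => ?_
    rw [hJdecomp]
    rfl
  have hP : W * Wᴴ = T * Tᴴ := by
    ext x y
    obtain ⟨b, i⟩ := x
    obtain ⟨b', j⟩ := y
    rw [Matrix.mul_apply, Matrix.mul_apply]
    simp only [Matrix.conjTranspose_apply]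
    have l1 : (∑ e, W (b, i) e * star (W (b', j) e))
        = ψ (Matrix.single i j (1 : ℂ)) b b' := by
      rw [hψV]
      exact Finset.sum_congr rfl fun e _ => rfl
    have l2 : (∑ y : C × (A × B × C), T (b, i) y * star (T (b', j) y))
        = ψ (Matrix.single i j (1 : ℂ)) b b' := (hTT i j b b').symm
    rw [l1, l2]
  set P : Matrix (B × A) (B × A) ℂ := W * Wᴴ with hPdef
  have hPpsd : P.PosSemidef := Matrix.posSemidef_self_mul_conjTranspose W
  obtain ⟨Pi, hPiH, hPPiH, hPPiP, hPiPPi⟩ := exists_pinv hPpsd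
  have hPh : Pᴴ = P := hPpsd.1
  have hfixT : P * Pi * T = T := proj_fix hPh hPPiH hPPiP hP.symm
  have hfixW : P * Pi * W = W := proj_fix hPh hPPiH hPPiP rfl
  set s : Matrix Ev (C × (A × B × C)) ℂ := Wᴴ * Pi * T with hsdef
  have hWs : W * s = T := by
    calc W * (Wᴴ * Pi * T) = W * Wᴴ * Pi * T := by
          rw [Matrix.mul_assoc (W * Wᴴ) Pi T, Matrix.mul_assoc W Wᴴ (Pi * T),
            Matrix.mul_assoc Wᴴ Pi T]
      _ = T := hfixT
  set Q : Matrix Ev Ev ℂ := Wᴴ * Pi * W with hQdef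
  have hWQ : W * Q = W := by
    calc W * (Wᴴ * Pi * W) = W * Wᴴ * Pi * W := by
          rw [Matrix.mul_assoc (W * Wᴴ) Pi W, Matrix.mul_assoc W Wᴴ (Pi * W),
            Matrix.mul_assoc Wᴴ Pi W]
      _ = W := hfixW
  have hssQ : s * sᴴ = Q := by
    have e1 : (Wᴴ * Pi * T)ᴴ = Tᴴ * (Pi * W) := by
      rw [Matrix.conjTranspose_mul, Matrix.conjTranspose_mul, hPiH,
        Matrix.conjTranspose_conjTranspose]
    have hTTt : T * Tᴴ = P := hP.symm
    have hmid : Pi * (P * (Pi * W)) = Pi * W := by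
      calc Pi * (P * (Pi * W)) = Pi * P * Pi * W := by simp only [Matrix.mul_assoc]
        _ = Pi * W := by rw [hPiPPi]
    calc s * sᴴ = Wᴴ * Pi * T * (Tᴴ * (Pi * W)) := by rw [hsdef, e1]
      _ = Wᴴ * (Pi * (T * (Tᴴ * (Pi * W)))) := by simp only [Matrix.mul_assoc]
      _ = Wᴴ * (Pi * (P * (Pi * W))) := by rw [← Matrix.mul_assoc T Tᴴ (Pi * W), hTTt]
      _ = Wᴴ * (Pi * W) := by rw [hmid]
      _ = Q := by rw [hQdef, Matrix.mul_assoc]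
  have hQH : Qᴴ = Q := by
    rw [hQdef, Matrix.conjTranspose_mul, Matrix.conjTranspose_mul, hPiH,
      Matrix.conjTranspose_conjTranspose, Matrix.mul_assoc]
  have hQQ : Q * Q = Q := by
    calc Q * Q = Wᴴ * Pi * (W * Q) := by rw [hQdef, Matrix.mul_assoc (Wᴴ * Pi) W Q]
      _ = Q := by rw [hWQ, hQdef]
  set R : Matrix Ev Ev ℂ := 1 - Q with hRdef
  have hRH : Rᴴ = R := by
    rw [hRdef, Matrix.conjTranspose_sub, Matrix.conjTranspose_one, hQH]
  have hRR : R * R = R := by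
    rw [hRdef, Matrix.mul_sub, Matrix.sub_mul, Matrix.sub_mul, hQQ,
      Matrix.mul_one, Matrix.one_mul]
    simp
  have hRpsd : R.PosSemidef := by
    have h := Matrix.posSemidef_conjTranspose_mul_self R
    rw [hRH, hRR] at h
    exact h
  have hWR : W * R = 0 := by rw [hRdef, Matrix.mul_sub, Matrix.mul_one, hWQ, sub_self]
  have hRtpsd : Rᵀ.PosSemidef := hRpsd.transpose
  obtain ⟨F, hFH, hFF⟩ := exists_herm_sqrt hRtpsd
  have c0 : C := Classical.arbitrary C
  -- the Kraus operators of the quotient channel (before precomposition with `lam`)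
  set K : ((A × B × C) ⊕ Ev) → Matrix C Ev ℂ := fun k =>
    Sum.elim (fun g : A × B × C => Matrix.of fun c e => s e (c, g))
      (fun f : Ev => Matrix.of fun c e => (if c = c0 then (1 : ℂ) else 0) * F f e) k
    with hKdef
  have hKinl : ∀ g : A × B × C, K (Sum.inl g) = Matrix.of fun c e => s e (c, g) :=
    fun g => rfl
  have hKinr : ∀ f : Ev,
      K (Sum.inr f) = Matrix.of fun c e => (if c = c0 then (1 : ℂ) else 0) * F f e :=
    fun f => rfl
  have hstar_ite : ∀ (p : Prop) [Decidable p],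
      star (if p then (1 : ℂ) else 0) = if p then (1 : ℂ) else 0 := by
    intro p _
    split <;> simp
  have hKsum : ∑ k, (K k)ᴴ * K k = 1 := by
    have hsplit : (∑ k, (K k)ᴴ * K k)
        = (∑ g : A × B × C, (K (Sum.inl g))ᴴ * K (Sum.inl g))
          + ∑ f : Ev, (K (Sum.inr f))ᴴ * K (Sum.inr f) :=
      Fintype.sum_sum_type (fun k => (K k)ᴴ * K k)
    have h1 : (∑ g : A × B × C, (K (Sum.inl g))ᴴ * K (Sum.inl g)) = Qᵀ := by
      ext e e'
      rw [Matrix.sum_apply]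
      have hRHS : Qᵀ e e' = ∑ c, ∑ g : A × B × C, s e' (c, g) * star (s e (c, g)) := by
        rw [show Qᵀ e e' = Q e' e from rfl, ← hssQ, Matrix.mul_apply, Fintype.sum_prod_type]
        refine Finset.sum_congr rfl fun c _ => Finset.sum_congr rfl fun g _ => ?_
        rw [Matrix.conjTranspose_apply]
      rw [hRHS, Finset.sum_comm]
      refine Finset.sum_congr rfl fun g _ => ?_
      rw [Matrix.mul_apply]
      refine Finset.sum_congr rfl fun c _ => ?_
      simp only [hKinl, Matrix.of_apply, Matrix.conjTranspose_apply]
      ring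
    have h2 : (∑ f : Ev, (K (Sum.inr f))ᴴ * K (Sum.inr f)) = Rᵀ := by
      ext e e'
      rw [Matrix.sum_apply]
      have hent : ∀ f : Ev, ((K (Sum.inr f))ᴴ * K (Sum.inr f)) e e'
          = star (F f e) * F f e' := by
        intro f
        rw [Matrix.mul_apply]
        simp only [hKinr, Matrix.of_apply, Matrix.conjTranspose_apply, star_mul', hstar_ite]
        rw [Finset.sum_eq_single c0]
        · simp
        · intro c _ hc
          simp [hc]
        · simp
      have hRHS : Rᵀ e e' = ∑ f, star (F f e) * F f e' := by
        rw [← hFF, Matrix.mul_apply]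
        refine Finset.sum_congr rfl fun f _ => ?_
        rw [show F e f = Fᴴ e f from by rw [hFH], Matrix.conjTranspose_apply]
      rw [hRHS]
      simp only [hent]
    rw [hsplit, h1, h2, ← Matrix.transpose_add, hRdef]
    simp
  -- the quotient channel
  have hΓ := kraus_isQuantumChannel K hKsum
  refine ⟨(fun σ => ∑ k, K k * σ * (K k)ᴴ) ∘ lam, isQuantumChannel_comp hΓ hlam, ?_⟩
  have hglin : IsLinearMap ℂ
      (((fun σ : Matrix Ev Ev ℂ => ∑ k, K k * σ * (K k)ᴴ) ∘ lam) ∘ ψ) := by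
    constructor
    · intro x y
      simp only [Function.comp_apply, hψ.1.map_add, hlam.1.map_add, hΓ.1.map_add]
    · intro c x
      simp only [Function.comp_apply, hψ.1.map_smul, hlam.1.map_smul, hΓ.1.map_smul]
  apply linear_ext hφ.1 hglin
  intro i j
  show φ (Matrix.single i j (1 : ℂ))
      = ∑ k, K k * (lam (ψ (Matrix.single i j (1 : ℂ)))) * (K k)ᴴ
  set X : Matrix Ev Ev ℂ := lam (ψ (Matrix.single i j (1 : ℂ))) with hXdef
  have hX : ∀ e e', X e e' = ∑ b, W (b, i) e * star (W (b, j) e') := by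
    intro e e'
    rw [hXdef, hψc]
    exact Finset.sum_congr rfl fun b _ => rfl
  have hWR' : ∀ (x : B × A) (e' : Ev), (∑ e, W x e * R e e') = 0 := by
    intro x e'
    have h0 : (W * R) x e' = 0 := by rw [hWR]; rfl
    rw [← h0, Matrix.mul_apply]
  have hXR : (∑ e, ∑ e', X e e' * R e e') = 0 := by
    have key : ∀ b : B, (∑ e, ∑ e', W (b, i) e * star (W (b, j) e') * R e e') = 0 := by
      intro b
      rw [Finset.sum_comm]
      refine Finset.sum_eq_zero fun e' _ => ?_
      have hfac : (∑ e, W (b, i) e * star (W (b, j) e') * R e e')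
          = star (W (b, j) e') * ∑ e, W (b, i) e * R e e' := by
        rw [Finset.mul_sum]
        exact Finset.sum_congr rfl fun e _ => by ring
      rw [hfac, hWR' (b, i) e', mul_zero]
    calc (∑ e, ∑ e', X e e' * R e e')
        = ∑ e, ∑ e', ∑ b, W (b, i) e * star (W (b, j) e') * R e e' := by
          refine Finset.sum_congr rfl fun e _ => Finset.sum_congr rfl fun e' _ => ?_
          rw [hX, Finset.sum_mul]
      _ = ∑ e, ∑ b, ∑ e', W (b, i) e * star (W (b, j) e') * R e e' :=
          Finset.sum_congr rfl fun e _ => Finset.sum_comm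
      _ = ∑ b, ∑ e, ∑ e', W (b, i) e * star (W (b, j) e') * R e e' := Finset.sum_comm
      _ = 0 := Finset.sum_eq_zero fun b _ => key b
  have hFcontr : ∀ e e' : Ev, (∑ f, F f e * star (F f e')) = R e e' := by
    intro e e'
    have h' : (∑ f, F f e * star (F f e')) = (Fᴴ * F) e' e := by
      rw [Matrix.mul_apply]
      refine Finset.sum_congr rfl fun f _ => ?_
      rw [Matrix.conjTranspose_apply]
      ring
    rw [h', hFH, hFF, Matrix.transpose_apply]
  have hinr : (∑ f : Ev, K (Sum.inr f) * X * (K (Sum.inr f))ᴴ) = 0 := by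
    ext c c'
    rw [Matrix.sum_apply, Matrix.zero_apply]
    by_cases hc : c = c0
    · by_cases hc' : c' = c0
      · have hent : ∀ f, (K (Sum.inr f) * X * (K (Sum.inr f))ᴴ) c c'
            = ∑ e', (∑ e, F f e * X e e') * star (F f e') := by
          intro f
          rw [Matrix.mul_apply]
          refine Finset.sum_congr rfl fun e' _ => ?_
          rw [Matrix.conjTranspose_apply, Matrix.mul_apply]
          simp only [hKinr, Matrix.of_apply, hc, hc', eq_self_iff_true, if_true, one_mul]
        simp only [hent]
        calc ∑ f, ∑ e', (∑ e, F f e * X e e') * star (F f e')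
            = ∑ f, ∑ e', ∑ e, F f e * X e e' * star (F f e') := by
              refine Finset.sum_congr rfl fun f _ => Finset.sum_congr rfl fun e' _ => ?_
              rw [Finset.sum_mul]
          _ = ∑ e', ∑ f, ∑ e, F f e * X e e' * star (F f e') := Finset.sum_comm
          _ = ∑ e', ∑ e, ∑ f, F f e * X e e' * star (F f e') :=
              Finset.sum_congr rfl fun e' _ => Finset.sum_comm
          _ = ∑ e', ∑ e, X e e' * ∑ f, F f e * star (F f e') := by
              refine Finset.sum_congr rfl fun e' _ => Finset.sum_congr rfl fun e _ => ?_
              rw [Finset.mul_sum]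
              exact Finset.sum_congr rfl fun f _ => by ring
          _ = ∑ e', ∑ e, X e e' * R e e' := by
              refine Finset.sum_congr rfl fun e' _ => Finset.sum_congr rfl fun e _ => ?_
              rw [hFcontr]
          _ = 0 := by rw [Finset.sum_comm]; exact hXR
      · refine Finset.sum_eq_zero fun f _ => ?_
        rw [Matrix.mul_apply]
        refine Finset.sum_eq_zero fun e' _ => ?_
        rw [Matrix.conjTranspose_apply]
        simp [hKinr, hc']
    · refine Finset.sum_eq_zero fun f _ => ?_
      rw [Matrix.mul_apply]
      refine Finset.sum_eq_zero fun e' _ => ?_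
      rw [Matrix.mul_apply]
      simp [hKinr, hc]
  have hTs : ∀ (x : B × A) (y : C × (A × B × C)), T x y = ∑ e, W x e * s e y := by
    intro x y
    rw [← hWs, Matrix.mul_apply]
  have hinl : (∑ g : A × B × C, K (Sum.inl g) * X * (K (Sum.inl g))ᴴ)
      = φ (Matrix.single i j (1 : ℂ)) := by
    ext c c'
    rw [Matrix.sum_apply, hφT]
    have hent : ∀ g : A × B × C, (K (Sum.inl g) * X * (K (Sum.inl g))ᴴ) c c'
        = ∑ b, T (b, i) (c, g) * star (T (b, j) (c', g)) := by
      intro g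
      calc (K (Sum.inl g) * X * (K (Sum.inl g))ᴴ) c c'
          = ∑ e', (∑ e, s e (c, g) * X e e') * star (s e' (c', g)) := by
            rw [Matrix.mul_apply]
            refine Finset.sum_congr rfl fun e' _ => ?_
            rw [Matrix.conjTranspose_apply, Matrix.mul_apply]
            simp only [hKinl, Matrix.of_apply]
        _ = ∑ e', ∑ e, ∑ b, s e (c, g) * (W (b, i) e * star (W (b, j) e'))
              * star (s e' (c', g)) := by
            refine Finset.sum_congr rfl fun e' _ => ?_
            rw [Finset.sum_mul]
            refine Finset.sum_congr rfl fun e _ => ?_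
            rw [hX, Finset.mul_sum, Finset.sum_mul]
        _ = ∑ e', ∑ b, ∑ e, s e (c, g) * (W (b, i) e * star (W (b, j) e'))
              * star (s e' (c', g)) :=
            Finset.sum_congr rfl fun e' _ => Finset.sum_comm
        _ = ∑ b, ∑ e', ∑ e, s e (c, g) * (W (b, i) e * star (W (b, j) e'))
              * star (s e' (c', g)) := Finset.sum_comm
        _ = ∑ b, ∑ e, ∑ e', s e (c, g) * (W (b, i) e * star (W (b, j) e'))
              * star (s e' (c', g)) :=
            Finset.sum_congr rfl fun b _ => Finset.sum_comm
        _ = ∑ b, (∑ e, W (b, i) e * s e (c, g)) * star (∑ e', W (b, j) e' * s e' (c', g)) := by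
            refine Finset.sum_congr rfl fun b _ => ?_
            rw [star_sum, Finset.sum_mul_sum]
            refine Finset.sum_congr rfl fun e _ => Finset.sum_congr rfl fun e' _ => ?_
            rw [star_mul']
            ring
        _ = ∑ b, T (b, i) (c, g) * star (T (b, j) (c', g)) := by
            refine Finset.sum_congr rfl fun b _ => ?_
            rw [hTs (b, i) (c, g), hTs (b, j) (c', g)]
    simp only [hent]
    exact Finset.sum_comm
  have hsplit2 : (∑ k, K k * X * (K k)ᴴ)
      = (∑ g : A × B × C, K (Sum.inl g) * X * (K (Sum.inl g))ᴴ)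
        + ∑ f : Ev, K (Sum.inr f) * X * (K (Sum.inr f))ᴴ :=
    Fintype.sum_sum_type (fun k => K k * X * (K k)ᴴ)
  rw [hsplit2, hinl, hinr, add_zero]

end
end

section
/- Let ψ : Matrix A A ℂ → Matrix B B ℂ and φ : Matrix A A ℂ → Matrix C C ℂ be quantum channels. If ψ admits a Stinespring dilation with respect to which it is anti-degradable, and ψ divides φ, then ψ and φ are compatible. (Theorem 2, part (ii).) -/
open Matrix Kronecker
open scoped ComplexOrder

noncomputable section

variable {A B C E : Type*}

/-- `ψ` is anti-degradable with respect to some Stinespring dilation with environment `E`. -/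
def AntiDegradableWith {A B : Type*} [Fintype A] [Fintype B] [DecidableEq A]
    (ψ : Matrix A A ℂ → Matrix B B ℂ) (E : Type) [Fintype E] : Prop :=
  Nonempty E ∧
  ∃ V : Matrix (B × E) A ℂ, IsStinespring ψ V ∧
    ∃ lam' : Matrix E E ℂ → Matrix B B ℂ, IsQuantumChannel lam' ∧
      ψ = lam' ∘ complementary V

/-- amplification on the left by identity -/
def amp (Λ : Matrix E E ℂ → Matrix C C ℂ) (M : Matrix (B × E) (B × E) ℂ) :
    Matrix (B × C) (B × C) ℂ :=
  Matrix.of fun p q => Λ (Matrix.of fun e e' => M (p.1, e) (q.1, e')) p.2 q.2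

lemma amp_psd [Fintype B] [Fintype E] [Fintype C]
    {Λ : Matrix E E ℂ → Matrix C C ℂ} (hΛ : IsCompletelyPositive Λ)
    {M : Matrix (B × E) (B × E) ℂ} (hM : M.PosSemidef) :
    (amp Λ M).PosSemidef := by
  classical
  let e : Fin (Fintype.card B) ≃ B := (Fintype.equivFin B).symm
  have hM' : (M.submatrix (Prod.map e id) (Prod.map e id)).PosSemidef := hM.submatrix _
  have h := hΛ (Fin (Fintype.card B)) _ hM'
  have heq : amp Λ M = (Matrix.of fun p q : Fin (Fintype.card B) × C =>
      Λ (Matrix.of fun a a' => (M.submatrix (Prod.map e id) (Prod.map e id)) (p.1, a) (q.1, a'))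
        p.2 q.2).submatrix
      (Prod.map e.symm id) (Prod.map e.symm id) := by
    ext ⟨b, c⟩ ⟨b', c'⟩
    simp [amp, Prod.map]
  rw [heq]
  exact h.submatrix _

lemma trace_amp [Fintype B] [Fintype E] [Fintype C]
    {Λ : Matrix E E ℂ → Matrix C C ℂ} (hΛ : ∀ ρ, (Λ ρ).trace = ρ.trace)
    (M : Matrix (B × E) (B × E) ℂ) : (amp Λ M).trace = M.trace := by
  calc (amp Λ M).trace = ∑ b : B, (Λ (Matrix.of fun e e' => M (b, e) (b, e'))).trace := by
        simp [Matrix.trace, amp, Fintype.sum_prod_type, Matrix.diag]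
    _ = ∑ b : B, (Matrix.of fun e e' : E => M (b, e) (b, e')).trace := by
        simp [hΛ]
    _ = M.trace := by simp [Matrix.trace, Fintype.sum_prod_type, Matrix.diag]

lemma trRight_amp [Fintype B] [Fintype E] [Fintype C]
    {Λ : Matrix E E ℂ → Matrix C C ℂ} (hΛ : ∀ ρ, (Λ ρ).trace = ρ.trace)
    (M : Matrix (B × E) (B × E) ℂ) : trRight (amp Λ M) = trRight M := by
  ext b b'
  have := hΛ (Matrix.of fun e e' => M (b, e) (b', e'))
  simpa [trRight, amp, Matrix.trace, Matrix.diag] using this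

lemma trLeft_amp [Fintype B] [Fintype E] [Fintype C]
    {Λ : Matrix E E ℂ → Matrix C C ℂ} (hΛ : IsLinearMap ℂ Λ)
    (M : Matrix (B × E) (B × E) ℂ) : trLeft (amp Λ M) = Λ (trLeft M) := by
  have h : Λ (trLeft M) = ∑ b : B, Λ (Matrix.of fun e e' => M (b, e) (b, e')) := by
    rw [show trLeft M = ∑ b : B, (Matrix.of fun e e' => M (b, e) (b, e')) by
      ext e e'; simp [trLeft, Matrix.sum_apply]]
    exact map_sum (IsLinearMap.mk' Λ hΛ) _ _
  ext c c'
  conv_rhs => rw [h]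
  simp [trLeft, amp, Matrix.sum_apply]

lemma channel_comp {A B C : Type*} [Fintype A] [Fintype B] [Fintype C]
    {f : Matrix B B ℂ → Matrix C C ℂ} {g : Matrix A A ℂ → Matrix B B ℂ}
    (hf : IsQuantumChannel f) (hg : IsQuantumChannel g) : IsQuantumChannel (f ∘ g) := by
  refine ⟨⟨fun x y => by simp [hg.1.map_add, hf.1.map_add],
          fun c x => by simp [hg.1.map_smul, hf.1.map_smul]⟩, ?_, fun ρ => by
            simp [hf.2.2, hg.2.2]⟩
  intro n _ M hM
  have h1 := hg.2.1 n M hM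
  have h2 := hf.2.1 n _ h1
  exact h2

lemma theta_cp {A B E C : Type*} [Fintype A] [Fintype B] [Fintype E] [Fintype C]
    (V : Matrix (B × E) A ℂ) {Λ : Matrix E E ℂ → Matrix C C ℂ}
    (hΛ : IsCompletelyPositive Λ) :
    IsCompletelyPositive (fun ρ : Matrix A A ℂ => amp Λ (V * ρ * Vᴴ)) := by
  intro n _ M hM
  classical
  let W : Matrix (n × (B × E)) (n × A) ℂ :=
    Matrix.of fun p q => if p.1 = q.1 then V p.2 q.2 else 0
  have hW : (W * M * Wᴴ).PosSemidef := hM.mul_mul_conjTranspose_same W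
  let g : (n × B) × E → n × (B × E) := fun p => (p.1.1, (p.1.2, p.2))
  have hM' : ((W * M * Wᴴ).submatrix g g).PosSemidef := hW.submatrix g
  have h := amp_psd hΛ hM'
  have key : (Matrix.of fun p q : n × (B × C) =>
      (fun ρ : Matrix A A ℂ => amp Λ (V * ρ * Vᴴ))
        (Matrix.of fun a a' => M (p.1, a) (q.1, a')) p.2 q.2)
      = (amp Λ ((W * M * Wᴴ).submatrix g g)).submatrix
        (fun p : n × (B × C) => ((p.1, p.2.1), p.2.2))
        (fun p : n × (B × C) => ((p.1, p.2.1), p.2.2)) := by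
    ext ⟨i, b, c⟩ ⟨j, b', c'⟩
    simp only [amp, Matrix.of_apply, Matrix.submatrix_apply]
    congr 1
    ext e e'
    simp only [Matrix.of_apply, Matrix.mul_apply, Matrix.conjTranspose_apply,
      Fintype.sum_prod_type, g, W, Matrix.of_apply]
    simp [apply_ite (starRingEnd ℂ), ite_mul, mul_ite, mul_zero, zero_mul,
      Finset.sum_ite_eq, Finset.sum_ite_eq']
  rw [key]
  exact h.submatrix _

/-- Theorem 2(ii): anti-degradable and dividing implies compatible. -/
theorem compatible_of_antidegradable_of_divides
    {A B C : Type*} [Fintype A] [Fintype B] [Fintype C]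
    [Nonempty A] [Nonempty B] [Nonempty C] [DecidableEq A]
    (ψ : Matrix A A ℂ → Matrix B B ℂ) (hψ : IsQuantumChannel ψ)
    (φ : Matrix A A ℂ → Matrix C C ℂ) (hφ : IsQuantumChannel φ)
    (hanti : ∃ (E : Type) (iE : Fintype E), @AntiDegradableWith A B _ _ _ ψ E iE)
    (hdiv : Divides ψ φ) :
    Compatible ψ φ := by
  obtain ⟨E, iE, -, V, ⟨hV1, hV2⟩, lam', hlam', hψc⟩ := hanti
  obtain ⟨θ', hθ', hφeq⟩ := hdiv
  set Λ := θ' ∘ lam' with hΛdef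
  have hΛ : IsQuantumChannel Λ := channel_comp hθ' hlam'
  refine ⟨fun ρ => amp Λ (V * ρ * Vᴴ), ⟨?_, theta_cp V hΛ.2.1, ?_⟩, ?_, ?_⟩
  · constructor
    · intro ρ σ
      have hb : (V * (ρ + σ) * Vᴴ) = V * ρ * Vᴴ + V * σ * Vᴴ := by
        rw [Matrix.mul_add, Matrix.add_mul]
      rw [hb]
      ext ⟨b, c⟩ ⟨b', c'⟩
      have : (Matrix.of fun e e' : E => (V * ρ * Vᴴ + V * σ * Vᴴ) (b, e) (b', e'))
          = (Matrix.of fun e e' : E => (V * ρ * Vᴴ) (b, e) (b', e'))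
            + (Matrix.of fun e e' : E => (V * σ * Vᴴ) (b, e) (b', e')) := by
        ext e e'; simp
      show Λ (Matrix.of fun e e' : E => (V * ρ * Vᴴ + V * σ * Vᴴ) (b, e) (b', e')) c c' = _
      rw [this, hΛ.1.map_add]
      simp [amp, Matrix.add_apply]
    · intro x ρ
      have hb : (V * (x • ρ) * Vᴴ) = x • (V * ρ * Vᴴ) := by
        rw [Matrix.mul_smul, Matrix.smul_mul]
      rw [hb]
      ext ⟨b, c⟩ ⟨b', c'⟩
      have : (Matrix.of fun e e' : E => (x • (V * ρ * Vᴴ)) (b, e) (b', e'))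
          = x • (Matrix.of fun e e' : E => (V * ρ * Vᴴ) (b, e) (b', e')) := by
        ext e e'; simp
      show Λ (Matrix.of fun e e' : E => (x • (V * ρ * Vᴴ)) (b, e) (b', e')) c c' = _
      rw [this, hΛ.1.map_smul]
      simp [amp, Matrix.smul_apply]
  · intro ρ
    rw [trace_amp hΛ.2.2]
    rw [Matrix.trace_mul_cycle, hV1, Matrix.one_mul]
  · funext ρ
    simp only [Function.comp_apply]
    rw [trRight_amp hΛ.2.2, hV2 ρ]
  · funext ρ
    simp only [Function.comp_apply]
    rw [trLeft_amp hΛ.1]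
    have h1 : trLeft (V * ρ * Vᴴ) = complementary V ρ := rfl
    rw [h1, hΛdef]
    have h2 : lam' (complementary V ρ) = ψ ρ := by
      rw [hψc]; rfl
    simp only [Function.comp_apply, h2]
    rw [hφeq]; rfl

end
end

section
/- Let A be a finite type with 2 ≤ Fintype.card A. The identity channel id : Matrix A A ℂ → Matrix A A ℂ is not compatible with itself: there is no quantum channel θ : Matrix A A ℂ → Matrix (A × A) (A × A) ℂ such that Tr over the second factor of θ(ρ) equals ρ and Tr over the first factor of θ(ρ) equals ρ for all ρ. In particular, since the identity channel trivially divides itself, divisibility does not imply compatibility. (No-broadcasting counterexample to Conjecture 1.) -/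
open Matrix Kronecker
open scoped ComplexOrder

noncomputable section

variable {A B C E : Type*}

/-- Diagonal entries of a PSD complex matrix are nonnegative. -/
lemma psd_diag_nonneg' {n : Type*} [Fintype n] [DecidableEq n] {M : Matrix n n ℂ}
    (hM : M.PosSemidef) (i : n) : 0 ≤ M i i := by
  exact hM.diag_nonneg

/-- If a PSD matrix has a zero diagonal entry, the whole row vanishes. -/
lemma psd_row_eq_zero' {n : Type*} [Fintype n] [DecidableEq n] {M : Matrix n n ℂ}
    (hM : M.PosSemidef) {i : n} (h : M i i = 0) (j : n) : M i j = 0 := by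
  have hv := (hM.dotProduct_mulVec_zero_iff (Pi.single i 1)).mp (by simp [h])
  have hcol : M j i = 0 := by
    simpa [Matrix.mulVec_single] using congrFun hv j
  rw [← hM.1.apply i j, hcol, star_zero]

/-- A completely positive map sends PSD matrices to PSD matrices. -/
lemma cp_psd {A B : Type*} [Fintype A] [Fintype B]
    {θ : Matrix A A ℂ → Matrix B B ℂ} (hθ : IsCompletelyPositive θ)
    {ρ : Matrix A A ℂ} (hρ : ρ.PosSemidef) : (θ ρ).PosSemidef := by
  have h := hθ Unit (ρ.submatrix Prod.snd Prod.snd) (hρ.submatrix _)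
  have h2 := h.submatrix (fun b : B => (((), b) : Unit × B))
  have hEq : ((Matrix.of fun p q : Unit × B =>
      θ (Matrix.of fun a a' => (ρ.submatrix Prod.snd Prod.snd) (p.1, a) (q.1, a')) p.2 q.2).submatrix
      (fun b : B => (((), b) : Unit × B)) (fun b : B => (((), b) : Unit × B))) = θ ρ := by
    ext b b'
    rfl
  rwa [hEq] at h2

/-- Rank-one outer product matrix. -/
def outerMat {A : Type*} (x : A → ℂ) : Matrix A A ℂ := Matrix.of fun a a' => x a * star (x a')

lemma outerMat_psd {A : Type*} [Fintype A] (x : A → ℂ) : (outerMat x).PosSemidef := by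
  have h := Matrix.posSemidef_conjTranspose_mul_self
    (Matrix.of fun (_ : Unit) a => star (x a))
  have he : outerMat x = (Matrix.of fun (_ : Unit) a => star (x a))ᴴ *
      (Matrix.of fun (_ : Unit) a => star (x a)) := by
    ext a a'
    simp [outerMat, Matrix.mul_apply, Matrix.conjTranspose_apply, mul_comm]
  rw [he]; exact h

/-- no-broadcasting: for `2 ≤ card A` the identity channel divides
itself but is not compatible with itself. -/
theorem id_divides_id_not_compatible_id
    {A : Type*} [Fintype A] [Nonempty A] (hA : 2 ≤ Fintype.card A) :
    Divides (id : Matrix A A ℂ → Matrix A A ℂ) (id : Matrix A A ℂ → Matrix A A ℂ) ∧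
    ¬ Compatible (id : Matrix A A ℂ → Matrix A A ℂ)
        (id : Matrix A A ℂ → Matrix A A ℂ) := by
  classical
  constructor
  · -- Divides: take the identity quotient channel.
    refine ⟨id, ⟨⟨fun _ _ => rfl, fun _ _ => rfl⟩, ?_, fun ρ => rfl⟩, rfl⟩
    intro n _ M hM
    have hEq : (Matrix.of fun p q : n × A =>
        (id (Matrix.of fun a a' => M (p.1, a) (q.1, a'))) p.2 q.2) = M := by
      ext p q
      rfl
    rwa [hEq]
  · rintro ⟨θ, ⟨hlin, hcp, htr⟩, hR, hL⟩
    obtain ⟨a0, a1, hne⟩ := Fintype.exists_pair_of_one_lt_card (by omega : 1 < Fintype.card A)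
    -- marginal identities
    have hRm : ∀ (ρ : Matrix A A ℂ) (b b' : A), ∑ c, θ ρ (b, c) (b', c) = ρ b b' := by
      intro ρ b b'
      exact (congrFun (congrFun (congrFun hR ρ) b) b').symm
    have hLm : ∀ (ρ : Matrix A A ℂ) (c c' : A), ∑ b, θ ρ (b, c) (b, c') = ρ c c' := by
      intro ρ c c'
      exact (congrFun (congrFun (congrFun hL ρ) c) c').symm
    set e0 : A → ℂ := fun a => if a = a0 then 1 else 0 with he0
    set e1 : A → ℂ := fun a => if a = a1 then 1 else 0 with he1
    set v : A → ℂ := fun a => if a = a0 then 1 else if a = a1 then 1 else 0 with hv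
    set w : A → ℂ := fun a => if a = a0 then 1 else if a = a1 then -1 else 0 with hw
    have hkey : outerMat v + outerMat w = (2:ℂ) • outerMat e0 + (2:ℂ) • outerMat e1 := by
      ext a a'
      simp only [outerMat, Matrix.add_apply, Matrix.smul_apply, Matrix.of_apply, smul_eq_mul,
        he0, he1, hv, hw]
      by_cases h0 : a = a0 <;> by_cases h1 : a = a1 <;>
        by_cases k0 : a' = a0 <;> by_cases k1 : a' = a1 <;>
        first
          | exact absurd (h0.symm.trans h1) hne
          | exact absurd (k0.symm.trans k1) hne
          | (simp [h0, h1, k0, k1, hne, Ne.symm hne]; try ring)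
    set Q0 := θ (outerMat e0) with hQ0def
    set Q1 := θ (outerMat e1) with hQ1def
    set M := θ (outerMat v) with hMdef
    set W := θ (outerMat w) with hWdef
    have hQ0psd : Q0.PosSemidef := cp_psd hcp (outerMat_psd e0)
    have hQ1psd : Q1.PosSemidef := cp_psd hcp (outerMat_psd e1)
    have hMpsd : M.PosSemidef := cp_psd hcp (outerMat_psd v)
    have hWpsd : W.PosSemidef := cp_psd hcp (outerMat_psd w)
    have hMW : M + W = (2:ℂ) • Q0 + (2:ℂ) • Q1 := by
      rw [hMdef, hWdef, hQ0def, hQ1def, ← hlin.1, hkey, hlin.1, hlin.2, hlin.2]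
    -- zero diagonal entries of Q0 and Q1
    have sum_diag_zero : ∀ {X : Matrix (A × A) (A × A) ℂ}, X.PosSemidef →
        ∀ (s : Finset (A × A)) (f : A × A → A × A), (∑ p ∈ s, X (f p) (f p)) = 0 →
        ∀ p ∈ s, X (f p) (f p) = 0 := by
      intro X hX s f hsum p hp
      exact (Finset.sum_eq_zero_iff_of_nonneg
        (fun q _ => psd_diag_nonneg' hX (f q))).mp hsum p hp
    have hQ0a : Q0 (a0, a1) (a0, a1) = 0 := by
      have hsum : ∑ b, Q0 (b, a1) (b, a1) = 0 := by
        rw [hQ0def, hLm (outerMat e0) a1 a1]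
        simp [outerMat, he0, hne.symm]
      exact (Finset.sum_eq_zero_iff_of_nonneg
        (fun b _ => psd_diag_nonneg' hQ0psd (b, a1))).mp hsum a0 (Finset.mem_univ a0)
    have hQ0b : Q0 (a1, a0) (a1, a0) = 0 := by
      have hsum : ∑ c, Q0 (a1, c) (a1, c) = 0 := by
        rw [hQ0def, hRm (outerMat e0) a1 a1]
        simp [outerMat, he0, hne.symm]
      exact (Finset.sum_eq_zero_iff_of_nonneg
        (fun c _ => psd_diag_nonneg' hQ0psd (a1, c))).mp hsum a0 (Finset.mem_univ a0)
    have hQ1a : Q1 (a0, a1) (a0, a1) = 0 := by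
      have hsum : ∑ c, Q1 (a0, c) (a0, c) = 0 := by
        rw [hQ1def, hRm (outerMat e1) a0 a0]
        simp [outerMat, he1, hne]
      exact (Finset.sum_eq_zero_iff_of_nonneg
        (fun c _ => psd_diag_nonneg' hQ1psd (a0, c))).mp hsum a1 (Finset.mem_univ a1)
    have hQ1b : Q1 (a1, a0) (a1, a0) = 0 := by
      have hsum : ∑ b, Q1 (b, a0) (b, a0) = 0 := by
        rw [hQ1def, hLm (outerMat e1) a0 a0]
        simp [outerMat, he1, hne]
      exact (Finset.sum_eq_zero_iff_of_nonneg
        (fun b _ => psd_diag_nonneg' hQ1psd (b, a0))).mp hsum a1 (Finset.mem_univ a1)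
    -- zero diagonal entries of M
    have hMdiag : ∀ p : A × A, Q0 p p = 0 → Q1 p p = 0 → M p p = 0 := by
      intro p h0 h1
      have hsum : M p p + W p p = 0 := by
        have := congrFun (congrFun hMW p) p
        simpa [Matrix.add_apply, Matrix.smul_apply, h0, h1] using this
      have hMn := psd_diag_nonneg' hMpsd p
      have hWn := psd_diag_nonneg' hWpsd p
      refine le_antisymm ?_ hMn
      calc M p p ≤ M p p + W p p := le_add_of_nonneg_right hWn
        _ = 0 := hsum
    have hM01 : M (a0, a1) (a0, a1) = 0 := hMdiag _ hQ0a hQ1a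
    have hM10 : M (a1, a0) (a1, a0) = 0 := hMdiag _ hQ0b hQ1b
    -- all terms in the (a0,a1) entry of the right marginal of M vanish
    have hzero : ∀ c, M (a0, c) (a1, c) = 0 := by
      intro c
      by_cases hc0 : c = a0
      · rw [hc0]
        have hrow := psd_row_eq_zero' hMpsd hM10 (a0, a0)
        have happ := hMpsd.1.apply (a1, a0) (a0, a0)
        exact star_eq_zero.mp (happ.trans hrow)
      · by_cases hc1 : c = a1
        · rw [hc1]
          exact psd_row_eq_zero' hMpsd hM01 (a1, a1)
        · have hdiag : M (a0, c) (a0, c) = 0 := by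
            have hsum : ∑ b, M (b, c) (b, c) = 0 := by
              rw [hMdef, hLm (outerMat v) c c]
              simp [outerMat, hv, hc0, hc1]
            exact (Finset.sum_eq_zero_iff_of_nonneg
              (fun b _ => psd_diag_nonneg' hMpsd (b, c))).mp hsum a0 (Finset.mem_univ a0)
          exact psd_row_eq_zero' hMpsd hdiag (a1, c)
    have hfin : ∑ c, M (a0, c) (a1, c) = outerMat v a0 a1 := hRm (outerMat v) a0 a1
    rw [Finset.sum_eq_zero (fun c _ => hzero c)] at hfin
    have : outerMat v a0 a1 = 1 := by
      simp [outerMat, hv, hne.symm]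
    rw [this] at hfin
    exact one_ne_zero hfin.symm


end
end

section
/- There is no catalysis of compatibility: let ψ : Matrix A A ℂ → Matrix B B ℂ and φ : Matrix A A ℂ → Matrix C C ℂ be quantum channels, and suppose there exist finite nonempty types A', B', B'' and quantum channels χ : Matrix A' A' ℂ → Matrix B' B' ℂ and χ' : Matrix A' A' ℂ → Matrix B'' B'' ℂ such that the tensor-product channels ψ ⊗ χ : Matrix (A × A') (A × A') ℂ → Matrix (B × B') (B × B') ℂ and φ ⊗ χ' : Matrix (A × A') (A × A') ℂ → Matrix (C × B'') (C × B'') ℂ are compatible. Then ψ and φ are compatible. (Example 3.) -/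
open Matrix Kronecker
open scoped ComplexOrder

noncomputable section

variable {A B C E : Type*}

lemma myPsdAdd {n : Type*} [Fintype n] {a b : Matrix n n ℂ}
    (ha : a.PosSemidef) (hb : b.PosSemidef) : (a + b).PosSemidef :=
  ha.add hb

lemma myPsdSum {n ι : Type*} [Fintype n] (s : Finset ι) (f : ι → Matrix n n ℂ)
    (h : ∀ i ∈ s, (f i).PosSemidef) : (∑ i ∈ s, f i).PosSemidef :=
  Finset.sum_induction f _ (fun _ _ => myPsdAdd) Matrix.PosSemidef.zero h

/-- Example 3: no catalysis of compatibility. -/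
theorem no_catalysis_of_compatibility
    {A B C A' B' B'' : Type*}
    [Fintype A] [Fintype B] [Fintype C] [Fintype A'] [Fintype B'] [Fintype B'']
    [Nonempty A] [Nonempty B] [Nonempty C] [Nonempty A'] [Nonempty B'] [Nonempty B'']
    (ψ : Matrix A A ℂ → Matrix B B ℂ) (hψ : IsQuantumChannel ψ)
    (φ : Matrix A A ℂ → Matrix C C ℂ) (hφ : IsQuantumChannel φ)
    (χ : Matrix A' A' ℂ → Matrix B' B' ℂ) (hχ : IsQuantumChannel χ)
    (χ' : Matrix A' A' ℂ → Matrix B'' B'' ℂ) (hχ' : IsQuantumChannel χ')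
    (Θ₁ : Matrix (A × A') (A × A') ℂ → Matrix (B × B') (B × B') ℂ)
    (hΘ₁ : IsQuantumChannel Θ₁) (hΘ₁lin : IsLinearMap ℂ Θ₁)
    (hΘ₁ten : ∀ (M : Matrix A A ℂ) (N : Matrix A' A' ℂ), Θ₁ (M ⊗ₖ N) = (ψ M) ⊗ₖ (χ N))
    (Θ₂ : Matrix (A × A') (A × A') ℂ → Matrix (C × B'') (C × B'') ℂ)
    (hΘ₂ : IsQuantumChannel Θ₂) (hΘ₂lin : IsLinearMap ℂ Θ₂)
    (hΘ₂ten : ∀ (M : Matrix A A ℂ) (N : Matrix A' A' ℂ), Θ₂ (M ⊗ₖ N) = (φ M) ⊗ₖ (χ' N))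
    (hcomp : Compatible Θ₁ Θ₂) :
    Compatible ψ φ := by
  classical
  obtain ⟨θ, ⟨hθlin, hθCP, hθtr⟩, hΘ₁eq, hΘ₂eq⟩ := hcomp
  set a₀ : A' := Classical.arbitrary A' with ha₀
  set σ : Matrix A' A' ℂ :=
    Matrix.of fun a a' => (if a = a₀ then (1:ℂ) else 0) * (if a' = a₀ then (1:ℂ) else 0)
    with hσ
  have hσtr : σ.trace = 1 := by
    simp [Matrix.trace, Matrix.diag, σ]
  -- the candidate compatibilizer for ψ, φ
  set θ₀ : Matrix A A ℂ → Matrix (B × C) (B × C) ℂ :=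
    fun ρ => Matrix.of fun x y => ∑ p : B', ∑ q : B'',
      θ (ρ ⊗ₖ σ) ((x.1, p), (x.2, q)) ((y.1, p), (y.2, q)) with hθ₀
  refine ⟨θ₀, ⟨?_, ?_, ?_⟩, ?_, ?_⟩
  · -- linearity
    constructor
    · intro x y
      ext z w
      simp [θ₀, Matrix.add_kronecker, hθlin.map_add, Finset.sum_add_distrib]
    · intro c x
      ext z w
      simp [θ₀, Matrix.smul_kronecker, hθlin.map_smul, Finset.mul_sum, smul_eq_mul]
  · -- complete positivity
    intro n _ M hM
    -- the extended matrix M ⊗ σ, arranged on n × (A × A')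
    set M' : Matrix (n × (A × A')) (n × (A × A')) ℂ :=
      Matrix.of fun p q => M (p.1, p.2.1) (q.1, q.2.1) * σ p.2.2 q.2.2 with hM'def
    have hM' : M'.PosSemidef := by
      set W : Matrix (n × A) (n × (A × A')) ℂ :=
        Matrix.of fun r s => if s = (r.1, (r.2, a₀)) then (1:ℂ) else 0 with hW
      have : M' = Wᴴ * M * W := by
        ext ⟨i, a, a'⟩ ⟨j, b, b'⟩
        simp only [M', W, σ, Matrix.mul_apply, Matrix.conjTranspose_apply,
          Matrix.of_apply, Fintype.sum_prod_type, Prod.mk.injEq, ite_and,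
          star_one, star_zero, mul_ite, ite_mul, one_mul, mul_one,
          zero_mul, mul_zero, Finset.sum_ite_eq, Finset.sum_ite_eq',
          Finset.sum_const_zero, Finset.mem_univ, if_true]
        by_cases ha' : a' = a₀ <;> by_cases hb' : b' = a₀ <;>
          simp [ha', hb', apply_ite (starRingEnd ℂ), ite_and, Finset.sum_ite_eq]
      rw [this]
      exact hM.conjTranspose_mul_mul_same W
    have hK := hθCP n M' hM'
    set K : Matrix (n × ((B × B') × (C × B''))) (n × ((B × B') × (C × B''))) ℂ :=
      Matrix.of fun p q =>
        θ (Matrix.of fun z w => M' (p.1, z) (q.1, w)) p.2 q.2 with hKdef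
    have hblock : ∀ i j : n,
        (Matrix.of fun a a' => M (i, a) (j, a')) ⊗ₖ σ
          = Matrix.of fun z w => M' ((i, z)) ((j, w)) := by
      intro i j
      ext ⟨a, a'⟩ ⟨b, b'⟩
      simp [M', Matrix.kroneckerMap_apply]
    have hT : (Matrix.of fun p q : n × (B × C) =>
        θ₀ (Matrix.of fun a a' => M (p.1, a) (q.1, a')) p.2 q.2)
        = ∑ pq : B' × B'', K.submatrix
            (fun r : n × (B × C) => (r.1, ((r.2.1, pq.1), (r.2.2, pq.2))))
            (fun r : n × (B × C) => (r.1, ((r.2.1, pq.1), (r.2.2, pq.2)))) := by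
      ext ⟨i, b, c⟩ ⟨j, b', c'⟩
      simp only [Matrix.of_apply, θ₀, hblock i j, Matrix.sum_apply,
        Matrix.submatrix_apply, K, Fintype.sum_prod_type]
    rw [hT]
    exact myPsdSum _ _ fun pq _ => hK.submatrix _
  · -- trace preservation
    intro ρ
    have h1 : (θ₀ ρ).trace = (θ (ρ ⊗ₖ σ)).trace := by
      simp only [Matrix.trace, Matrix.diag, θ₀, Matrix.of_apply, Fintype.sum_prod_type]
      exact Finset.sum_congr rfl fun b _ => Finset.sum_comm
    rw [h1, hθtr, Matrix.trace_kronecker, hσtr, mul_one]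
  · -- first marginal
    funext ρ
    have h1 : trRight (θ (ρ ⊗ₖ σ)) = ψ ρ ⊗ₖ χ σ := by
      rw [← hΘ₁ten]
      exact (congrFun hΘ₁eq _).symm
    have hχσ : ∑ p : B', χ σ p p = 1 := by
      have := hχ.2.2 σ
      rw [hσtr] at this
      simpa [Matrix.trace, Matrix.diag] using this
    ext b b'
    have h2 : trRight (θ₀ ρ) b b' = ∑ p : B', trRight (θ (ρ ⊗ₖ σ)) (b, p) (b', p) := by
      simp only [trRight, θ₀, Matrix.of_apply, Fintype.sum_prod_type]
      exact Finset.sum_comm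
    have : trRight (θ₀ ρ) b b' = ψ ρ b b' := by
      rw [h2, h1]
      simp [Matrix.kroneckerMap_apply, ← Finset.mul_sum, hχσ]
    exact this.symm
  · -- second marginal
    funext ρ
    have h1 : trLeft (θ (ρ ⊗ₖ σ)) = φ ρ ⊗ₖ χ' σ := by
      rw [← hΘ₂ten]
      exact (congrFun hΘ₂eq _).symm
    have hχσ : ∑ q : B'', χ' σ q q = 1 := by
      have := hχ'.2.2 σ
      rw [hσtr] at this
      simpa [Matrix.trace, Matrix.diag] using this
    ext c c'
    have h2 : trLeft (θ₀ ρ) c c' = ∑ q : B'', trLeft (θ (ρ ⊗ₖ σ)) (c, q) (c', q) := by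
      simp only [trLeft, θ₀, Matrix.of_apply, Fintype.sum_prod_type]
      rw [show (∑ b : B, ∑ p : B', ∑ q : B'',
            θ (ρ ⊗ₖ σ) ((b, p), (c, q)) ((b, p), (c', q)))
          = ∑ b : B, ∑ q : B'', ∑ p : B',
            θ (ρ ⊗ₖ σ) ((b, p), (c, q)) ((b, p), (c', q)) from
        Finset.sum_congr rfl fun b _ => Finset.sum_comm]
      exact Finset.sum_comm
    have : trLeft (θ₀ ρ) c c' = φ ρ c c' := by
      rw [h2, h1]
      simp [Matrix.kroneckerMap_apply, ← Finset.mul_sum, hχσ]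
    exact this.symm

end
end

section
/- Compatibility does not imply divisibility: let B and C be finite nonempty types with 2 ≤ Fintype.card C, set A := B × C, let ψ : Matrix A A ℂ → Matrix B B ℂ be the channel ψ ρ = ((trace ρ) / (Fintype.card B)) • 1 (the completely depolarizing channel applied to the B-marginal), and let φ := Tr_B : Matrix A A ℂ → Matrix C C ℂ be the partial-trace channel. Then ψ and φ are quantum channels, ψ and φ are compatible, but there is no linear map θ' : Matrix B B ℂ → Matrix C C ℂ (in particular no quantum channel) with φ = θ' ∘ ψ; hence ψ does not divide φ. (Counterexample to Conjecture 2.) -/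
open Matrix Kronecker
open scoped ComplexOrder

noncomputable section

variable {A B C E : Type*}

/-- Scaling a PSD matrix by a nonnegative real scalar preserves positive semidefiniteness. -/
lemma psd_smul' {I : Type*} [Fintype I] {M : Matrix I I ℂ} (hM : M.PosSemidef)
    {c : ℝ} (hc : 0 ≤ c) : ((c : ℂ) • M).PosSemidef := by
  rw [Matrix.posSemidef_iff_dotProduct_mulVec]
  constructor
  · unfold Matrix.IsHermitian
    rw [conjTranspose_smul, hM.1.eq]
    norm_num
  · intro x
    rw [Matrix.smul_mulVec, dotProduct_smul, smul_eq_mul]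
    exact mul_nonneg (by exact_mod_cast Complex.zero_le_real.2 hc) (hM.dotProduct_mulVec_nonneg x)

/-- The key positivity lemma: a "delta times sum of compressions" matrix is PSD. -/
lemma psd_delta_sum {I J K L : Type*} [Fintype I] [Fintype J] [Fintype K] [Fintype L]
    [DecidableEq L] {M : Matrix I I ℂ} (hM : M.PosSemidef)
    (g : K → J → I) (π : J → L) {c : ℝ} (hc : 0 ≤ c) :
    (Matrix.of fun p q : J =>
      if π p = π q then (c : ℂ) * ∑ k, M (g k p) (g k q) else 0).PosSemidef := by
  classical
  have key : (Matrix.of fun p q : J =>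
      if π p = π q then (c : ℂ) * ∑ k, M (g k p) (g k q) else 0) =
      (c : ℂ) • ∑ kl : K × L,
        (Matrix.diagonal fun p => if π p = kl.2 then (1:ℂ) else 0)ᴴ *
          (M.submatrix (g kl.1) (g kl.1)) *
          (Matrix.diagonal fun p => if π p = kl.2 then (1:ℂ) else 0) := by
    ext p q
    rw [Matrix.smul_apply, Matrix.sum_apply]
    simp only [Matrix.diagonal_conjTranspose, Matrix.diagonal_mul, Matrix.mul_diagonal,
      Matrix.submatrix_apply, Pi.star_apply, star_one, star_zero,
      Fintype.sum_prod_type, mul_ite, ite_mul, mul_one, mul_zero, zero_mul, one_mul,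
      Finset.sum_ite_eq, Finset.mem_univ, if_true, Matrix.of_apply]
    by_cases h : π p = π q
    · simp [h, Finset.mul_sum]
    · simp [h]
  rw [key]
  refine psd_smul' ?_ hc
  refine Finset.sum_induction _ _ (fun a b ha hb => ha.add hb) Matrix.PosSemidef.zero ?_
  exact fun kl _ => (hM.submatrix (g kl.1)).conjTranspose_mul_mul_same _

/-- The partial trace over the left factor preserves the trace. -/
lemma trLeft_trace' {B C : Type*} [Fintype B] [Fintype C] (ρ : Matrix (B × C) (B × C) ℂ) :
    (trLeft ρ).trace = ρ.trace := by
  simp only [trLeft, Matrix.trace, Matrix.diag, Matrix.of_apply, Fintype.sum_prod_type]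
  rw [Finset.sum_comm]

/-- the completely depolarizing `B`-marginal channel and the partial
trace `Tr_B` are compatible, but the former does not divide the latter. -/
theorem compatible_not_divides_counterexample
    {B C : Type*} [Fintype B] [Fintype C] [Nonempty B] [Nonempty C] [DecidableEq B]
    (hC : 2 ≤ Fintype.card C)
    (ψ : Matrix (B × C) (B × C) ℂ → Matrix B B ℂ)
    (hψdef : ψ = fun ρ => (ρ.trace / (Fintype.card B : ℂ)) • (1 : Matrix B B ℂ))
    (φ : Matrix (B × C) (B × C) ℂ → Matrix C C ℂ)
    (hφdef : φ = trLeft) :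
    IsQuantumChannel ψ ∧ IsQuantumChannel φ ∧ Compatible ψ φ ∧
      ¬ ∃ θ' : Matrix B B ℂ → Matrix C C ℂ, IsLinearMap ℂ θ' ∧ φ = θ' ∘ ψ := by
  classical
  have hBne : (Fintype.card B : ℂ) ≠ 0 := Nat.cast_ne_zero.2 Fintype.card_ne_zero
  -- ψ is a quantum channel
  have hψQC : IsQuantumChannel ψ := by
    subst hψdef
    refine ⟨⟨fun ρ σ => ?_, fun a ρ => ?_⟩, ?_, fun ρ => ?_⟩
    · simp [Matrix.trace_add, add_div, add_smul]
    · simp [Matrix.trace_smul, smul_smul, mul_div_assoc]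
    · intro n _ M hM
      have h2 := psd_delta_sum hM (fun (k : B × C) (p : n × B) => (p.1, k)) Prod.snd
        (c := (Fintype.card B : ℝ)⁻¹) (by positivity)
      convert h2 using 1
      ext p q
      simp only [Matrix.of_apply, Matrix.smul_apply, Matrix.one_apply, Matrix.trace,
        Matrix.diag, smul_eq_mul, mul_ite, mul_one, mul_zero, div_eq_inv_mul]
      push_cast
      rfl
    · simp [Matrix.trace_smul, Matrix.trace_one, smul_eq_mul, div_mul_cancel₀ _ hBne]
  -- φ is a quantum channel
  have hφQC : IsQuantumChannel φ := by
    subst hφdef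
    refine ⟨⟨fun ρ σ => ?_, fun a ρ => ?_⟩, ?_, fun ρ => trLeft_trace' ρ⟩
    · ext c c'; simp [trLeft, Finset.sum_add_distrib]
    · ext c c'; simp [trLeft, Finset.mul_sum]
    · intro n _ M hM
      have h2 := psd_delta_sum hM (fun (b : B) (p : n × C) => (p.1, (b, p.2)))
        (fun _ => (0 : Fin 1)) (c := 1) zero_le_one
      convert h2 using 1
      ext p q
      simp [trLeft]
  -- compatibility
  have hcompat : Compatible ψ φ := by
    set θ : Matrix (B × C) (B × C) ℂ → Matrix (B × C) (B × C) ℂ :=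
      fun ρ => Matrix.of fun p q : B × C =>
        if p.1 = q.1 then (Fintype.card B : ℂ)⁻¹ * trLeft ρ p.2 q.2 else 0 with hθ
    refine ⟨θ, ⟨⟨fun ρ σ => ?_, fun a ρ => ?_⟩, ?_, fun ρ => ?_⟩, ?_, ?_⟩
    · ext p q
      by_cases h : p.1 = q.1 <;> simp [hθ, h, trLeft, Finset.sum_add_distrib, mul_add]
    · ext p q
      by_cases h : p.1 = q.1 <;>
        simp [hθ, h, trLeft, Finset.mul_sum, mul_left_comm]
    · intro n _ M hM
      have h2 := psd_delta_sum hM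
        (fun (b : B) (p : n × (B × C)) => (p.1, (b, p.2.2))) (fun p => p.2.1)
        (c := (Fintype.card B : ℝ)⁻¹) (by positivity)
      convert h2 using 1
      ext p q
      by_cases h : p.2.1 = q.2.1 <;> simp [hθ, h, trLeft]
    · -- trace preserving
      have : (θ ρ).trace = ∑ p : B × C, (Fintype.card B : ℂ)⁻¹ * trLeft ρ p.2 p.2 := by
        simp [hθ, Matrix.trace, Matrix.diag]
      rw [this, ← trLeft_trace' ρ]
      simp only [Matrix.trace, Matrix.diag, Fintype.sum_prod_type, Finset.sum_const,
        Finset.card_univ, nsmul_eq_mul]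
      rw [← Finset.mul_sum, ← mul_assoc, mul_inv_cancel₀ hBne, one_mul]
    · -- trRight ∘ θ = ψ
      funext ρ
      ext b b'
      have : (trRight (θ ρ)) b b' =
          ∑ c, (if b = b' then (Fintype.card B : ℂ)⁻¹ * trLeft ρ c c else 0) := by
        simp [trRight, hθ]
      rw [Function.comp_apply, this, hψdef]
      by_cases h : b = b'
      · simp only [h, if_true, Matrix.one_apply_eq, ← Finset.mul_sum, smul_eq_mul, mul_one,
          div_eq_inv_mul]
        rw [show ∑ c, trLeft ρ c c = (trLeft ρ).trace from rfl, trLeft_trace' ρ]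
        simp [Matrix.smul_apply, Matrix.one_apply_eq]
      · simp [h, Matrix.one_apply]
    · -- trLeft ∘ θ = φ
      funext ρ
      ext c c'
      rw [hφdef]
      have : (trLeft (θ ρ)) c c' = ∑ b : B, (Fintype.card B : ℂ)⁻¹ * trLeft ρ c c' := by
        simp [trLeft, hθ]
      rw [Function.comp_apply, this, Finset.sum_const, Finset.card_univ, nsmul_eq_mul,
        ← mul_assoc, mul_inv_cancel₀ hBne, one_mul]
  refine ⟨hψQC, hφQC, hcompat, ?_⟩
  -- no linear quotient map
  rintro ⟨θ', -, hθ'⟩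
  obtain ⟨c₀, c₁, hcc⟩ := Fintype.exists_pair_of_one_lt_card (α := C) (by omega)
  obtain ⟨b₀⟩ := ‹Nonempty B›
  set ρ₁ : Matrix (B × C) (B × C) ℂ :=
    Matrix.of fun p q => if p = (b₀, c₀) ∧ q = (b₀, c₀) then 1 else 0 with hρ₁
  set ρ₂ : Matrix (B × C) (B × C) ℂ :=
    Matrix.of fun p q => if p = (b₀, c₁) ∧ q = (b₀, c₁) then 1 else 0 with hρ₂
  have htr : ρ₁.trace = ρ₂.trace := by
    simp [hρ₁, hρ₂, Matrix.trace, Matrix.diag]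
  have hψeq : ψ ρ₁ = ψ ρ₂ := by rw [hψdef]; simp [htr]
  have hφeq : φ ρ₁ = φ ρ₂ := by
    rw [hθ']
    simp [Function.comp_apply, hψeq]
  have h1 : φ ρ₁ c₀ c₀ = 1 := by
    rw [hφdef]
    simp [trLeft, hρ₁, Prod.ext_iff, Finset.filter_eq']
  have h2 : φ ρ₂ c₀ c₀ = 0 := by
    rw [hφdef]
    simp [trLeft, hρ₂, Prod.ext_iff, hcc]
  rw [hφeq, h2] at h1
  exact one_ne_zero h1.symm

end
end

section
/- Post-processing the environment of a dilation yields a compatibilizer: let V : Matrix (B × E) A ℂ be a Stinespring dilation with environment E of a quantum channel ψ : Matrix A A ℂ → Matrix B B ℂ, with associated complementary channel ψᶜ : Matrix A A ℂ → Matrix E E ℂ, and let Λ : Matrix E E ℂ → Matrix C C ℂ be a quantum channel. Then the map Θ : Matrix A A ℂ → Matrix (B × C) (B × C) ℂ, Θ ρ = (id_B ⊗ Λ)(V * ρ * Vᴴ), where id_B is the identity map on Matrix B B ℂ, is a quantum channel satisfying Tr_C ∘ Θ = ψ and Tr_B ∘ Θ = Λ ∘ ψᶜ; in particular Θ is a compatibilizer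 for ψ and Λ ∘ ψᶜ. (Constructive core of the 'if' direction of Theorem 1.) -/
open Matrix Kronecker
open scoped ComplexOrder

noncomputable section

variable {A B C E : Type*}

/-- Auxiliary: entrywise formula for `idLam` from linearity and the Kronecker property. -/
lemma idLam_entry {B C E : Type*} [Fintype B] [Fintype C] [Fintype E]
    (Lam : Matrix E E ℂ → Matrix C C ℂ) (hL : IsLinearMap ℂ Lam)
    (idLam : Matrix (B × E) (B × E) ℂ → Matrix (B × C) (B × C) ℂ)
    (hlin : IsLinearMap ℂ idLam)
    (hten : ∀ (M : Matrix B B ℂ) (N : Matrix E E ℂ), idLam (M ⊗ₖ N) = M ⊗ₖ (Lam N))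
    (M : Matrix (B × E) (B × E) ℂ) (b b' : B) (c c' : C) :
    idLam M (b, c) (b', c') = Lam (Matrix.of fun e e' => M (b, e) (b', e')) c c' := by
  classical
  have hstd : ∀ (p q : B × E) (x : ℂ), Matrix.single p q x =
      x • (Matrix.single p.1 q.1 (1:ℂ) ⊗ₖ Matrix.single p.2 q.2 (1:ℂ)) := by
    intro p q x
    ext ⟨i, j⟩ ⟨i', j'⟩
    simp only [Matrix.single, of_apply, Matrix.smul_apply, kroneckerMap_apply, smul_eq_mul,
      Prod.ext_iff, Prod.mk.injEq]
    split_ifs <;> simp_all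
  set L : Matrix (B × E) (B × E) ℂ →ₗ[ℂ] Matrix (B × C) (B × C) ℂ :=
    IsLinearMap.mk' idLam hlin
  set LL : Matrix E E ℂ →ₗ[ℂ] Matrix C C ℂ := IsLinearMap.mk' Lam hL
  have h1 : idLam M = ∑ p : B × E, ∑ q : B × E,
      M p q • (Matrix.single p.1 q.1 (1:ℂ) ⊗ₖ Lam (Matrix.single p.2 q.2 (1:ℂ))) := by
    have : idLam M = L M := rfl
    rw [this]
    conv_lhs => rw [matrix_eq_sum_single M]
    rw [map_sum]
    refine Finset.sum_congr rfl fun p _ => ?_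
    rw [map_sum]
    refine Finset.sum_congr rfl fun q _ => ?_
    rw [hstd, L.map_smul]
    show M p q • idLam _ = _
    rw [hten]
  have h2 : (Matrix.of fun e e' => M (b, e) (b', e')) =
      ∑ e : E, ∑ e' : E, M (b, e) (b', e') • Matrix.single e e' (1:ℂ) := by
    conv_lhs => rw [matrix_eq_sum_single (Matrix.of fun e e' => M (b, e) (b', e'))]
    refine Finset.sum_congr rfl fun e _ => Finset.sum_congr rfl fun e' _ => ?_
    rw [smul_single, smul_eq_mul, mul_one, of_apply]
  have h3 : Lam (Matrix.of fun e e' => M (b, e) (b', e')) =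
      ∑ e : E, ∑ e' : E, M (b, e) (b', e') • Lam (Matrix.single e e' (1:ℂ)) := by
    show LL _ = _
    rw [h2, map_sum]
    refine Finset.sum_congr rfl fun e _ => ?_
    rw [map_sum]
    refine Finset.sum_congr rfl fun e' _ => ?_
    exact LL.map_smul _ _
  rw [h1, h3]
  simp only [Matrix.sum_apply, Matrix.smul_apply, kroneckerMap_apply, smul_eq_mul]
  simp only [Matrix.single, of_apply, ite_mul, one_mul, zero_mul, mul_ite, mul_zero, ite_and]
  rw [Fintype.sum_prod_type]
  rw [Finset.sum_comm]
  simp only [Fintype.sum_prod_type]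
  refine Finset.sum_congr rfl fun e _ => ?_
  rw [Finset.sum_eq_single_of_mem b (Finset.mem_univ b) (fun x _ hne => by simp [hne])]
  rw [Finset.sum_eq_single_of_mem b' (Finset.mem_univ b') (fun x _ hne => by simp [hne])]
  simp

/-- Auxiliary: entries of the conjugation of a block matrix by `1 ⊗ V`. -/
lemma N_entry {A B E n : Type*} [Fintype A] [Fintype B] [Fintype E]
    [DecidableEq n] [Fintype n] (V : Matrix (B × E) A ℂ)
    (M : Matrix (n × A) (n × A) ℂ) (i j : n) (b b' : B) (e e' : E) :
    ((Matrix.of fun (p : (n × B) × E) (q : n × A) =>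
        if p.1.1 = q.1 then V (p.1.2, p.2) q.2 else 0) * M *
     (Matrix.of fun (p : (n × B) × E) (q : n × A) =>
        if p.1.1 = q.1 then V (p.1.2, p.2) q.2 else 0)ᴴ) ((i, b), e) ((j, b'), e') =
    (V * (Matrix.of fun a a' => M (i, a) (j, a')) * Vᴴ) (b, e) (b', e') := by
  simp only [Matrix.mul_apply, Matrix.conjTranspose_apply, Matrix.of_apply,
    Fintype.sum_prod_type, ite_mul, zero_mul, mul_ite, mul_zero,
    Finset.sum_ite_eq, Finset.sum_ite_eq', Finset.mem_univ, if_true]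
  rw [Finset.sum_eq_single_of_mem j (Finset.mem_univ j) (fun x _ hne => by simp [Ne.symm hne])]
  simp only [eq_self_iff_true, if_true]
  refine Finset.sum_congr rfl fun a _ => ?_
  congr 1
  rw [Finset.sum_eq_single_of_mem i (Finset.mem_univ i) (fun x _ hne => by simp [Ne.symm hne])]
  simp

/-- post-processing the environment of a dilation yields a
compatibilizer for `ψ` and `Λ ∘ ψᶜ`. -/
theorem compatibilizer_of_environment_postprocessing
    {A B C E : Type*} [Fintype A] [Fintype B] [Fintype C] [Fintype E]
    [Nonempty A] [Nonempty B] [Nonempty C] [Nonempty E] [DecidableEq A]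
    (ψ : Matrix A A ℂ → Matrix B B ℂ) (hψ : IsQuantumChannel ψ)
    (V : Matrix (B × E) A ℂ) (hV : IsStinespring ψ V)
    (Lam : Matrix E E ℂ → Matrix C C ℂ) (hLam : IsQuantumChannel Lam)
    (idLam : Matrix (B × E) (B × E) ℂ → Matrix (B × C) (B × C) ℂ)
    (hlin : IsLinearMap ℂ idLam)
    (hten : ∀ (M : Matrix B B ℂ) (N : Matrix E E ℂ), idLam (M ⊗ₖ N) = M ⊗ₖ (Lam N)) :
    IsQuantumChannel (fun ρ : Matrix A A ℂ => idLam (V * ρ * Vᴴ)) ∧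
    trRight ∘ (fun ρ : Matrix A A ℂ => idLam (V * ρ * Vᴴ)) = ψ ∧
    trLeft ∘ (fun ρ : Matrix A A ℂ => idLam (V * ρ * Vᴴ)) = Lam ∘ complementary V ∧
    Compatible ψ (Lam ∘ complementary V) := by
  classical
  obtain ⟨hVis, hVdil⟩ := hV
  obtain ⟨hLlin, hLcp, hLtr⟩ := hLam
  have hentry : ∀ (M : Matrix (B × E) (B × E) ℂ) (b b' : B) (c c' : C),
      idLam M (b, c) (b', c') = Lam (Matrix.of fun e e' => M (b, e) (b', e')) c c' :=
    idLam_entry Lam hLlin idLam hlin hten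
  have hΘlin : IsLinearMap ℂ (fun ρ : Matrix A A ℂ => idLam (V * ρ * Vᴴ)) := by
    constructor
    · intro ρ σ
      show idLam (V * (ρ + σ) * Vᴴ) = idLam (V * ρ * Vᴴ) + idLam (V * σ * Vᴴ)
      rw [Matrix.mul_add, Matrix.add_mul]
      exact hlin.map_add _ _
    · intro c ρ
      show idLam (V * (c • ρ) * Vᴴ) = c • idLam (V * ρ * Vᴴ)
      rw [Matrix.mul_smul, Matrix.smul_mul]
      exact hlin.map_smul _ _
  have hΘcp : IsCompletelyPositive (fun ρ : Matrix A A ℂ => idLam (V * ρ * Vᴴ)) := by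
    intro n _ M hM
    letI : DecidableEq n := Classical.decEq n
    set W : Matrix ((n × B) × E) (n × A) ℂ :=
      Matrix.of fun p q => if p.1.1 = q.1 then V (p.1.2, p.2) q.2 else 0 with hW
    have hN : (W * M * Wᴴ).PosSemidef := hM.mul_mul_conjTranspose_same W
    set k := Fintype.card B with hk
    set eB : B ≃ Fin k := Fintype.equivFin B with heB
    set f : (n × Fin k) × E → (n × B) × E := fun p => ((p.1.1, eB.symm p.1.2), p.2) with hf
    have hN' : ((W * M * Wᴴ).submatrix f f).PosSemidef := hN.submatrix f
    have hcp := hLcp (n × Fin k) ((W * M * Wᴴ).submatrix f f) hN'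
    set g : n × (B × C) → (n × Fin k) × C := fun p => ((p.1, eB p.2.1), p.2.2) with hg
    have hgoal : (Matrix.of fun p q : n × (B × C) =>
        idLam (V * (Matrix.of fun a a' => M (p.1, a) (q.1, a')) * Vᴴ) p.2 q.2) =
        (Matrix.of fun p q : (n × Fin k) × C =>
          Lam (Matrix.of fun e e' =>
            ((W * M * Wᴴ).submatrix f f) ((p.1), e) ((q.1), e')) p.2 q.2).submatrix g g := by
      ext ⟨i, b, c⟩ ⟨j, b', c'⟩
      simp only [Matrix.of_apply, Matrix.submatrix_apply, hg, hf, Equiv.symm_apply_apply]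
      rw [hentry]
      congr 1
      ext e e'
      simp only [Matrix.of_apply, Matrix.submatrix_apply, hf, Equiv.symm_apply_apply]
      exact (N_entry V M i j b b' e e').symm
    exact hgoal ▸ hcp.submatrix g
  have hΘtr : ∀ ρ : Matrix A A ℂ, (idLam (V * ρ * Vᴴ)).trace = ρ.trace := by
    intro ρ
    have h1 : (idLam (V * ρ * Vᴴ)).trace =
        ∑ b : B, (Lam (Matrix.of fun e e' => (V * ρ * Vᴴ) (b, e) (b, e'))).trace := by
      rw [Matrix.trace, Fintype.sum_prod_type]
      refine Finset.sum_congr rfl fun b _ => ?_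
      rw [Matrix.trace]
      refine Finset.sum_congr rfl fun c _ => ?_
      simpa only [Matrix.diag_apply] using hentry (V * ρ * Vᴴ) b b c c
    rw [h1]
    have h2 : ∀ b : B, (Lam (Matrix.of fun e e' => (V * ρ * Vᴴ) (b, e) (b, e'))).trace
        = ∑ e : E, (V * ρ * Vᴴ) (b, e) (b, e) := by
      intro b
      rw [hLtr, Matrix.trace]
      exact Finset.sum_congr rfl fun e _ => rfl
    calc ∑ b : B, (Lam (Matrix.of fun e e' => (V * ρ * Vᴴ) (b, e) (b, e'))).trace
        = ∑ b : B, ∑ e : E, (V * ρ * Vᴴ) (b, e) (b, e) :=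
          Finset.sum_congr rfl fun b _ => h2 b
      _ = (V * ρ * Vᴴ).trace := by
          rw [Matrix.trace, Fintype.sum_prod_type]
          rfl
      _ = ρ.trace := by rw [Matrix.trace_mul_cycle, hVis, one_mul]
  have hΘch : IsQuantumChannel (fun ρ : Matrix A A ℂ => idLam (V * ρ * Vᴴ)) :=
    ⟨hΘlin, hΘcp, hΘtr⟩
  have hTrR : trRight ∘ (fun ρ : Matrix A A ℂ => idLam (V * ρ * Vᴴ)) = ψ := by
    funext ρ
    ext b b'
    show ∑ c : C, idLam (V * ρ * Vᴴ) (b, c) (b', c) = ψ ρ b b'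
    rw [hVdil ρ]
    have : ∑ c : C, idLam (V * ρ * Vᴴ) (b, c) (b', c)
        = (Lam (Matrix.of fun e e' => (V * ρ * Vᴴ) (b, e) (b', e'))).trace := by
      rw [Matrix.trace]
      exact Finset.sum_congr rfl fun c _ => hentry (V * ρ * Vᴴ) b b' c c
    rw [this, hLtr, Matrix.trace]
    exact Finset.sum_congr rfl fun e _ => rfl
  have hTrL : trLeft ∘ (fun ρ : Matrix A A ℂ => idLam (V * ρ * Vᴴ))
      = Lam ∘ complementary V := by
    funext ρ
    ext c c'
    show ∑ b : B, idLam (V * ρ * Vᴴ) (b, c) (b, c') = Lam (complementary V ρ) c c'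
    have hdec : complementary V ρ
        = ∑ b : B, (Matrix.of fun e e' => (V * ρ * Vᴴ) (b, e) (b, e')) := by
      ext e e'
      simp [complementary, trLeft, Matrix.sum_apply]
    set LL : Matrix E E ℂ →ₗ[ℂ] Matrix C C ℂ := IsLinearMap.mk' Lam hLlin
    have hsum : Lam (complementary V ρ)
        = ∑ b : B, Lam (Matrix.of fun e e' => (V * ρ * Vᴴ) (b, e) (b, e')) := by
      show LL _ = _
      rw [hdec, map_sum]
      rfl
    rw [hsum, Matrix.sum_apply]
    exact Finset.sum_congr rfl fun b _ => hentry (V * ρ * Vᴴ) b b c c'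
  exact ⟨hΘch, hTrR, hTrL,
    ⟨fun ρ : Matrix A A ℂ => idLam (V * ρ * Vᴴ), hΘch, hTrR.symm, hTrL.symm⟩⟩


end
end

section
/- Anti-degradable divisible families are pairwise compatible: let T : ℕ, let B : Fin (T + 1) → Type be finite nonempty types, and let ψ : (k : Fin (T + 1)) → (Matrix A A ℂ → Matrix (B k) (B k) ℂ) be a family of quantum channels. Suppose for every k with k + 1 ≤ T that ψ k admits a Stinespring dilation with respect to which it is anti-degradable, and that there exists a quantum channel θ_k : Matrix (B k) (B k) ℂ → Matrix (B (k+1)) (B (k+1)) ℂ with ψ (k+1) = θ_k ∘ ψ k (the family is divisible). Then for every such k, the channels ψ k and ψ (k+1) are compatible. (Remark after Corollary 1.) -/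
open Matrix Kronecker
open scoped ComplexOrder

noncomputable section

variable {A B C E : Type*}

lemma qc_comp' {A B C : Type*} [Fintype A] [Fintype B] [Fintype C]
    {φ : Matrix A A ℂ → Matrix B B ℂ} {θ : Matrix B B ℂ → Matrix C C ℂ}
    (hφ : IsQuantumChannel φ) (hθ : IsQuantumChannel θ) : IsQuantumChannel (θ ∘ φ) := by
  refine ⟨⟨fun x y => by simp [Function.comp, hφ.1.map_add, hθ.1.map_add],
          fun c x => by simp [Function.comp, hφ.1.map_smul, hθ.1.map_smul]⟩, ?_,
          fun ρ => by simp [Function.comp, hθ.2.2, hφ.2.2]⟩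
  intro n _ M hM
  exact hθ.2.1 n _ (hφ.2.1 n M hM)

theorem key {A : Type*} {Bk E C : Type} [Fintype A] [Fintype Bk] [Fintype E] [Fintype C]
    [DecidableEq A]
    (V : Matrix (Bk × E) A ℂ) (hV : Vᴴ * V = 1)
    (Φ : Matrix E E ℂ → Matrix C C ℂ) (hΦ : IsQuantumChannel Φ) :
    IsQuantumChannel (fun ρ : Matrix A A ℂ => Matrix.of fun p q : Bk × C =>
      Φ (Matrix.of fun e e' => (V * ρ * Vᴴ) (p.1, e) (q.1, e')) p.2 q.2) ∧
    (∀ ρ : Matrix A A ℂ, trRight (Matrix.of fun p q : Bk × C =>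
      Φ (Matrix.of fun e e' => (V * ρ * Vᴴ) (p.1, e) (q.1, e')) p.2 q.2)
      = trRight (V * ρ * Vᴴ)) ∧
    (∀ ρ : Matrix A A ℂ, trLeft (Matrix.of fun p q : Bk × C =>
      Φ (Matrix.of fun e e' => (V * ρ * Vᴴ) (p.1, e) (q.1, e')) p.2 q.2)
      = Φ (trLeft (V * ρ * Vᴴ))) := by
  have hlin := hΦ.1
  refine ⟨⟨⟨?_, ?_⟩, ?_, ?_⟩, ?_, ?_⟩
  · intro x y
    ext p q
    have h1 : (Matrix.of fun e e' => (V * (x + y) * Vᴴ) (p.1, e) (q.1, e'))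
        = (Matrix.of fun e e' => (V * x * Vᴴ) (p.1, e) (q.1, e'))
          + (Matrix.of fun e e' => (V * y * Vᴴ) (p.1, e) (q.1, e')) := by
      ext e e'; simp [Matrix.mul_add, Matrix.add_mul]
    show Φ (Matrix.of fun e e' => (V * (x + y) * Vᴴ) (p.1, e) (q.1, e')) p.2 q.2 = _
    rw [h1, hlin.map_add]
    rfl
  · intro c x
    ext p q
    have h1 : (Matrix.of fun e e' => (V * (c • x) * Vᴴ) (p.1, e) (q.1, e'))
        = c • (Matrix.of fun e e' => (V * x * Vᴴ) (p.1, e) (q.1, e')) := by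
      ext e e'; simp [Matrix.mul_smul, Matrix.smul_mul]
    show Φ (Matrix.of fun e e' => (V * (c • x) * Vᴴ) (p.1, e) (q.1, e')) p.2 q.2 = _
    rw [h1, hlin.map_smul]
    rfl
  · -- complete positivity
    intro n _ M hM
    classical
    set W : Matrix ((n × Bk) × E) (n × A) ℂ :=
      Matrix.of fun x y => if x.1.1 = y.1 then V (x.1.2, x.2) y.2 else 0 with hW
    have hM1 : (W * M * Wᴴ).PosSemidef := hM.mul_mul_conjTranspose_same W
    have hCP := hΦ.2.1 (n × Bk) (W * M * Wᴴ) hM1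
    have hWM : ∀ (i : n) (b : Bk) (e : E) (z : n × A),
        (W * M) ((i, b), e) z = ∑ a, V (b, e) a * M (i, a) z := by
      intro i b e z
      rw [Matrix.mul_apply, Fintype.sum_prod_type]
      simp [hW, ite_mul, Finset.sum_ite_irrel, Finset.sum_ite_eq]
    have hentry : ∀ (i j : n) (b b' : Bk) (e e' : E),
        (W * M * Wᴴ) ((i, b), e) ((j, b'), e')
        = (V * (Matrix.of fun a a' => M (i, a) (j, a')) * Vᴴ) (b, e) (b', e') := by
      intro i j b b' e e'
      rw [Matrix.mul_apply, Fintype.sum_prod_type]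
      simp only [Matrix.conjTranspose_apply, hW, Matrix.of_apply, apply_ite (star (R := ℂ)),
        star_zero, mul_ite, mul_zero, Finset.sum_ite_irrel, Finset.sum_const_zero,
        Finset.sum_ite_eq, Finset.mem_univ, if_true, hWM]
      simp [Matrix.mul_apply, Matrix.conjTranspose_apply, Fintype.sum_prod_type,
        Finset.sum_ite_irrel, Finset.sum_const_zero, Finset.sum_ite_eq]
    show (Matrix.of fun p q : n × (Bk × C) =>
        Φ (Matrix.of fun e e' =>
          (V * (Matrix.of fun a a' => M (p.1, a) (q.1, a')) * Vᴴ) (p.2.1, e) (q.2.1, e'))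
          p.2.2 q.2.2).PosSemidef
    have goal_eq : (Matrix.of fun p q : n × (Bk × C) =>
        Φ (Matrix.of fun e e' =>
          (V * (Matrix.of fun a a' => M (p.1, a) (q.1, a')) * Vᴴ) (p.2.1, e) (q.2.1, e'))
          p.2.2 q.2.2)
        = (Matrix.of fun p q : (n × Bk) × C =>
            Φ (Matrix.of fun e e' => (W * M * Wᴴ) (p.1, e) (q.1, e')) p.2 q.2).submatrix
          (fun p : n × (Bk × C) => ((p.1, p.2.1), p.2.2))
          (fun p : n × (Bk × C) => ((p.1, p.2.1), p.2.2)) := by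
      ext p q
      simp only [Matrix.submatrix_apply, Matrix.of_apply]
      congr 1
      ext e e'
      simp only [Matrix.of_apply]
      exact (hentry p.1 q.1 p.2.1 q.2.1 e e').symm
    rw [goal_eq]
    have hCP' : (Matrix.of fun p q : (n × Bk) × C =>
        Φ (Matrix.of fun e e' => (W * M * Wᴴ) (p.1, e) (q.1, e')) p.2 q.2).PosSemidef := by
      convert hCP using 2
    exact hCP'.submatrix _
  · -- trace preserving
    intro ρ
    have htr : ∀ N : Matrix E E ℂ, (Φ N).trace = N.trace := hΦ.2.2
    have h1 : (V * ρ * Vᴴ).trace = ρ.trace := by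
      rw [Matrix.trace_mul_cycle, hV, Matrix.one_mul]
    calc (Matrix.of fun p q : Bk × C =>
          Φ (Matrix.of fun e e' => (V * ρ * Vᴴ) (p.1, e) (q.1, e')) p.2 q.2).trace
        = ∑ b : Bk, ∑ c : C,
            Φ (Matrix.of fun e e' => (V * ρ * Vᴴ) (b, e) (b, e')) c c := by
          simp [Matrix.trace, Matrix.diag, Fintype.sum_prod_type]
      _ = ∑ b : Bk, (Φ (Matrix.of fun e e' => (V * ρ * Vᴴ) (b, e) (b, e'))).trace := rfl
      _ = ∑ b : Bk, (Matrix.of fun e e' => (V * ρ * Vᴴ) (b, e) (b, e')).trace := by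
          simp_rw [htr]
      _ = (V * ρ * Vᴴ).trace := by
          simp [Matrix.trace, Matrix.diag, Fintype.sum_prod_type]
      _ = ρ.trace := h1
  · -- right trace
    intro ρ
    ext b b'
    have htr : ∀ N : Matrix E E ℂ, (Φ N).trace = N.trace := hΦ.2.2
    calc (trRight (Matrix.of fun p q : Bk × C =>
          Φ (Matrix.of fun e e' => (V * ρ * Vᴴ) (p.1, e) (q.1, e')) p.2 q.2)) b b'
        = (Φ (Matrix.of fun e e' => (V * ρ * Vᴴ) (b, e) (b', e'))).trace := by
          simp [trRight, Matrix.trace, Matrix.diag]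
      _ = (Matrix.of fun e e' => (V * ρ * Vᴴ) (b, e) (b', e')).trace := htr _
      _ = trRight (V * ρ * Vᴴ) b b' := by simp [trRight, Matrix.trace, Matrix.diag]
  · -- left trace
    intro ρ
    ext c c'
    have hsum : (∑ b : Bk, (Matrix.of fun e e' => (V * ρ * Vᴴ) (b, e) (b, e')))
        = trLeft (V * ρ * Vᴴ) := by
      ext e e'
      simp [trLeft, Matrix.sum_apply]
    have hms := map_sum (IsLinearMap.mk' Φ hΦ.1)
      (fun b : Bk => (Matrix.of fun e e' => (V * ρ * Vᴴ) (b, e) (b, e'))) Finset.univ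
    simp only [IsLinearMap.mk'_apply] at hms
    calc (trLeft (Matrix.of fun p q : Bk × C =>
          Φ (Matrix.of fun e e' => (V * ρ * Vᴴ) (p.1, e) (q.1, e')) p.2 q.2)) c c'
        = ∑ b : Bk, Φ (Matrix.of fun e e' => (V * ρ * Vᴴ) (b, e) (b, e')) c c' := by
          simp [trLeft]
      _ = (∑ b : Bk, Φ (Matrix.of fun e e' => (V * ρ * Vᴴ) (b, e) (b, e'))) c c' := by
          simp [Matrix.sum_apply]
      _ = Φ (trLeft (V * ρ * Vᴴ)) c c' := by rw [← hsum, hms]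


/-- a divisible family of anti-degradable channels is pairwise
(consecutively) compatible. -/
theorem compatible_family_of_antidegradable_of_divisible
    (T : ℕ) {A : Type*} [Fintype A] [Nonempty A] [DecidableEq A]
    (B : Fin (T + 1) → Type) [∀ k, Fintype (B k)] [∀ k, Nonempty (B k)]
    (ψ : (k : Fin (T + 1)) → Matrix A A ℂ → Matrix (B k) (B k) ℂ)
    (hch : ∀ k, IsQuantumChannel (ψ k))
    (hanti : ∀ (k : Fin (T + 1)), (k : ℕ) + 1 ≤ T →
      ∃ (E : Type) (iE : Fintype E), @AntiDegradableWith A (B k) _ _ _ (ψ k) E iE)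
    (hdiv : ∀ (k : Fin (T + 1)) (hk : (k : ℕ) + 1 ≤ T),
      ∃ θ : Matrix (B k) (B k) ℂ →
          Matrix (B ⟨(k : ℕ) + 1, by omega⟩) (B ⟨(k : ℕ) + 1, by omega⟩) ℂ,
        IsQuantumChannel θ ∧ ψ ⟨(k : ℕ) + 1, by omega⟩ = θ ∘ ψ k) :
    ∀ (k : Fin (T + 1)) (hk : (k : ℕ) + 1 ≤ T),
      Compatible (ψ k) (ψ ⟨(k : ℕ) + 1, by omega⟩) := by
  intro k hk
  obtain ⟨E, iE, hE, V, ⟨hV1, hV2⟩, lam', hlam', hpsik⟩ := hanti k hk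
  obtain ⟨θ, hθ, hsucc⟩ := hdiv k hk
  letI : Fintype E := iE
  have hΦ : IsQuantumChannel (θ ∘ lam') := qc_comp' hlam' hθ
  obtain ⟨hch', hR, hL⟩ := key V hV1 (θ ∘ lam') hΦ
  refine ⟨fun ρ => Matrix.of fun p q => (θ ∘ lam')
      (Matrix.of fun e e' => (V * ρ * Vᴴ) (p.1, e) (q.1, e')) p.2 q.2, hch', ?_, ?_⟩
  · funext ρ
    rw [Function.comp_apply, hR ρ, ← hV2 ρ]
  · funext ρ
    rw [Function.comp_apply, hL ρ]
    have h1 : lam' (trLeft (V * ρ * Vᴴ)) = ψ k ρ := by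
      rw [hpsik]; rfl
    have h2 : θ (lam' (trLeft (V * ρ * Vᴴ))) = ψ ⟨(k : ℕ) + 1, by omega⟩ ρ := by
      rw [h1, hsucc]; rfl
    exact h2.symm


end
end
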